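/- arXiv:0709.0089 — 12 statements merged into one kernel-verified Lean document; each statement's English description precedes it below -/
import Mathlib

section
/- Let p be an odd prime. For every continuous function f : ℤ_p → ℚ_p, the limit I_{−1}(f) = lim_{N→∞} Σ_{x=0}^{p^N−1} (−1)^x f(x) exists in ℚ_p, and it satisfies I_{−1}(f₁) + I_{−1}(f) = 2·f(0), where f₁ : ℤ_p → ℚ_p is defined by f₁(x) = f(x+1). -/
/-!
Splitting `x < p^(N+1)` as `x = p^N b + a` with `b < p`, `a < p^N`, and using that `p` is odd,
the increment of the partial sums is `∑_{b,a} (-1)^(b+a) (f(p^N b + a) - f(a))`. By uniform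
continuity every term is small once `p^N` is, and the ultrametric inequality bounds the sum by its
largest term; so the increments tend to `0`, which in a complete ultrametric field makes the
partial sums converge. The shift identity telescopes:
`∑_{x<n} (-1)^x (f(x+1) + f(x)) = f(0) + f(n)` for odd `n`, and `f(p^N) → f(0)`.
-/

open Filter Finset Topology

theorem Finset.sum_range_mul_eq_sum_sum {M : Type*} [AddCommMonoid M] (g : ℕ → M) (m : ℕ) :
    ∀ n : ℕ, ∑ x ∈ range (m * n), g x = ∑ b ∈ range n, ∑ a ∈ range m, g (m * b + a)
  | 0 => by simp
  | n + 1 => by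
    rw [mul_add, mul_one, sum_range_add, sum_range_mul_eq_sum_sum g m n, sum_range_succ]

section AlternatingSums

variable {R : Type*} [CommRing R]

theorem alternating_sum_shift_add_alternating_sum (g : ℕ → R) {n : ℕ} (hn : Odd n) :
    ∑ x ∈ range n, (-1) ^ x * g (x + 1) + ∑ x ∈ range n, (-1) ^ x * g x = g 0 + g n :=
  calc _ = ∑ x ∈ range n, ((-1) ^ (x + 1 + 1) * g (x + 1) - (-1) ^ (x + 1) * g x) := by
        rw [← sum_add_distrib]
        exact sum_congr rfl fun x _ => by ring
    _ = (-1) ^ (n + 1) * g n - (-1) ^ (0 + 1) * g 0 :=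
        sum_range_sub (fun x => (-1 : R) ^ (x + 1) * g x) n
    _ = g 0 + g n := by rw [hn.add_one.neg_one_pow]; ring

theorem alternating_sum_range_mul_sub_alternating_sum (g : ℕ → R) {m n : ℕ} (hm : Odd m)
    (hn : Odd n) :
    ∑ x ∈ range (m * n), (-1) ^ x * g x - ∑ a ∈ range m, (-1) ^ a * g a =
      ∑ b ∈ range n, ∑ a ∈ range m, (-1) ^ (b + a) * (g (m * b + a) - g a) := by
  have hsign : ∀ a b, (-1 : R) ^ (m * b + a) = (-1) ^ (b + a) := fun a b => by
    rw [pow_add, pow_add, pow_mul, hm.neg_one_pow]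
  have hgeom : ∑ b ∈ range n, (-1 : R) ^ b = 1 := by
    rw [neg_one_geom_sum, if_neg (Nat.not_even_iff_odd.mpr hn)]
  calc _ = ∑ b ∈ range n, ∑ a ∈ range m, (-1) ^ (b + a) * g (m * b + a)
        - (∑ b ∈ range n, (-1) ^ b) * ∑ a ∈ range m, (-1) ^ a * g a := by
        simp only [sum_range_mul_eq_sum_sum, hsign, hgeom, one_mul]
    _ = _ := by
        rw [sum_mul, ← sum_sub_distrib]
        refine sum_congr rfl fun b _ => ?_
        rw [mul_sum, ← sum_sub_distrib]
        exact sum_congr rfl fun a _ => by ring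

end AlternatingSums

section FermionicSum

variable (p : ℕ) [Fact p.Prime] {K : Type*} [NormedField K]

noncomputable def fermionicSum (f : ℤ_[p] → K) (N : ℕ) : K :=
  ∑ x ∈ range (p ^ N), (-1) ^ x * f x

variable {p}

theorem fermionicSum_shift_add (hp : Odd p) (f : ℤ_[p] → K) (N : ℕ) :
    fermionicSum p (fun x => f (x + 1)) N + fermionicSum p f N =
      f 0 + f ((p ^ N : ℕ) : ℤ_[p]) := by
  simpa only [fermionicSum, Nat.cast_succ, Nat.cast_zero] using
    alternating_sum_shift_add_alternating_sum (fun x : ℕ => f x) hp.pow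

theorem norm_fermionicSum_succ_sub_le [IsUltrametricDist K] (hp : Odd p) (f : ℤ_[p] → K)
    (N : ℕ) {C : ℝ} (hC : 0 ≤ C)
    (hfC : ∀ x y : ℤ_[p], dist x y ≤ (p : ℝ)⁻¹ ^ N → dist (f x) (f y) ≤ C) :
    ‖fermionicSum p f (N + 1) - fermionicSum p f N‖ ≤ C := by
  rw [fermionicSum, fermionicSum, pow_succ,
    alternating_sum_range_mul_sub_alternating_sum _ hp.pow hp]
  refine IsUltrametricDist.norm_sum_le_of_forall_le_of_nonneg hC fun b _ =>
    IsUltrametricDist.norm_sum_le_of_forall_le_of_nonneg hC fun a _ => ?_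
  rw [norm_mul, norm_pow, norm_neg, norm_one, one_pow, one_mul, ← dist_eq_norm]
  refine hfC _ _ ?_
  rw [dist_eq_norm, Nat.cast_add, add_sub_cancel_right, Nat.cast_mul, Nat.cast_pow, norm_mul,
    norm_pow, PadicInt.norm_p]
  exact mul_le_of_le_one_right (by positivity) (PadicInt.norm_le_one _)

theorem tendsto_fermionicSum_succ_sub [IsUltrametricDist K] (hp : Odd p) {f : ℤ_[p] → K}
    (hf : Continuous f) :
    Tendsto (fun N => fermionicSum p f (N + 1) - fermionicSum p f N) atTop (𝓝 0) := by
  rw [NormedAddGroup.tendsto_nhds_zero]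
  intro ε hε
  obtain ⟨δ, hδ, hfδ⟩ := Metric.uniformContinuous_iff_le.mp
    (CompactSpace.uniformContinuous_of_continuous hf) (ε / 2) (half_pos hε)
  have hp_inv : Tendsto (fun N : ℕ => (p : ℝ)⁻¹ ^ N) atTop (𝓝 0) :=
    tendsto_pow_atTop_nhds_zero_of_lt_one (by positivity)
      (inv_lt_one_of_one_lt₀ (mod_cast (Fact.out : p.Prime).one_lt))
  filter_upwards [hp_inv.eventually (ge_mem_nhds hδ)] with N hN
  exact (norm_fermionicSum_succ_sub_le hp f N (half_pos hε).le
    fun x y hxy => hfδ (hxy.trans hN)).trans_lt (half_lt_self hε)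

theorem exists_tendsto_fermionicSum [IsUltrametricDist K] [CompleteSpace K] (hp : Odd p)
    {f : ℤ_[p] → K} (hf : Continuous f) : ∃ I, Tendsto (fermionicSum p f) atTop (𝓝 I) :=
  cauchySeq_tendsto_of_complete <|
    NonarchimedeanAddGroup.cauchySeq_of_tendsto_sub_nhds_zero (tendsto_fermionicSum_succ_sub hp hf)

theorem tendsto_fermionicSum_shift (hp : Odd p) {f : ℤ_[p] → K} (hf : Continuous f) {I : K}
    (hI : Tendsto (fermionicSum p f) atTop (𝓝 I)) :
    Tendsto (fermionicSum p fun x => f (x + 1)) atTop (𝓝 (2 * f 0 - I)) := by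
  have hp_pow : Tendsto (fun N : ℕ => ((p ^ N : ℕ) : ℤ_[p])) atTop (𝓝 0) := by
    simpa only [Nat.cast_pow] using tendsto_pow_atTop_nhds_zero_of_norm_lt_one
      (PadicInt.norm_p (p := p) ▸ inv_lt_one_of_one_lt₀ (mod_cast (Fact.out : p.Prime).one_lt))
  rw [two_mul]
  refine ((tendsto_const_nhds.add ((hf.tendsto 0).comp hp_pow)).sub hI).congr fun N => ?_
  exact (eq_sub_of_add_eq (fermionicSum_shift_add hp f N)).symm

end FermionicSum

/-- For an odd prime `p` and a continuous `f : ℤ_p → ℚ_p`, the fermionic `p`-adic integral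
`I₋₁(f) = lim_N ∑_{x=0}^{p^N-1} (-1)^x f(x)` exists, and `I₋₁(f₁) + I₋₁(f) = 2 f(0)`
where `f₁(x) = f(x+1)`. -/
theorem fermionic_integral_exists_and_shift (p : ℕ) [Fact (Nat.Prime p)] (hp : Odd p)
    (f : ℤ_[p] → ℚ_[p]) (hf : Continuous f) :
    ∃ I I₁ : ℚ_[p],
      Tendsto (fun N : ℕ => ∑ x ∈ range (p ^ N), (-1 : ℚ_[p]) ^ x * f (x : ℤ_[p]))
        atTop (nhds I) ∧
      Tendsto (fun N : ℕ => ∑ x ∈ range (p ^ N), (-1 : ℚ_[p]) ^ x * f ((x : ℤ_[p]) + 1))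
        atTop (nhds I₁) ∧
      I₁ + I = 2 * f 0 := by
  obtain ⟨I, hI⟩ := exists_tendsto_fermionicSum hp hf
  exact ⟨I, 2 * f 0 - I, hI, tendsto_fermionicSum_shift hp hf hI, sub_add_cancel _ _⟩
end

section
/- Let p be an odd prime, q ∈ ℚ_p with |1 − q|_p < 1, and n a positive integer. For every continuous function f : ℤ_p → ℚ_p, one has q^n·I_{−q}(f_n) + (−1)^{n−1}·I_{−q}(f) = [2]_q·Σ_{l=0}^{n−1} (−1)^{n−1−l} q^l f(l), where f_n(x) = f(x+n). In particular, if n is odd then q^n·I_{−q}(f_n) + I_{−q}(f) = [2]_q·Σ_{l=0}^{n−1} (−1)^l q^l f(l). -/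
open Filter Finset Topology IsUltrametricDist

section FermAux

variable {p : ℕ} [hpp : Fact (Nat.Prime p)]

private lemma FA.norm_q_eq_one {q : ℚ_[p]} (hq : ‖1 - q‖ < 1) : ‖q‖ = 1 := by
  have h1 : ‖q‖ ≤ 1 := by
    have h : q = 1 + -(1 - q) := by ring
    rw [h]
    refine (norm_add_le_max _ _).trans ?_
    simp only [norm_one, norm_neg]
    exact max_le le_rfl hq.le
  rcases lt_or_ge ‖q‖ 1 with h | h
  · exfalso
    have h0 : (1:ℝ) = ‖q + (1 - q)‖ := by norm_num
    have h2 := (norm_add_le_max q (1-q)).trans_lt (max_lt h hq)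
    rw [← h0] at h2; exact lt_irrefl _ h2
  · exact le_antisymm h1 h

private lemma FA.norm_pow_sub_one_le {x : ℚ_[p]} (hx : ‖x‖ ≤ 1) (j : ℕ) :
    ‖x ^ j - 1‖ ≤ ‖x - 1‖ := by
  induction j with
  | zero => simp
  | succ j ih =>
    have h : x ^ (j+1) - 1 = x ^ j * (x - 1) + (x ^ j - 1) := by ring
    rw [h]
    refine (norm_add_le_max _ _).trans (max_le ?_ ih)
    rw [norm_mul]
    calc ‖x^j‖ * ‖x-1‖ ≤ 1 * ‖x-1‖ := by
          refine mul_le_mul_of_nonneg_right ?_ (norm_nonneg _)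
          rw [norm_pow]; exact pow_le_one₀ (norm_nonneg x) hx
      _ = ‖x-1‖ := one_mul _

private lemma FA.sum_range_mul {M : Type*} [AddCommMonoid M] (g : ℕ → M) (k m : ℕ) :
    ∑ x ∈ range (k * m), g x = ∑ j ∈ range k, ∑ i ∈ range m, g (j * m + i) := by
  induction k with
  | zero => simp
  | succ k ih => rw [Nat.succ_mul, Finset.sum_range_add, ih, Finset.sum_range_succ]

private lemma FA.norm_choose_le {k : ℕ} (hk : k ≠ 0) (hkp : k < p) :
    ‖((p.choose k : ℕ) : ℚ_[p])‖ ≤ (p:ℝ)⁻¹ := by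
  have hdvd : (p:ℤ) ^ 1 ∣ (p.choose k : ℤ) := by
    rw [pow_one]
    exact_mod_cast Int.natCast_dvd_natCast.mpr (Nat.Prime.dvd_choose_self hpp.out hk hkp)
  have := (Padic.norm_int_le_pow_iff_dvd (p := p) (p.choose k : ℤ) 1).mpr hdvd
  simpa using this

private lemma FA.norm_pow_p_sub_one {x : ℚ_[p]} (hx : ‖x - 1‖ < 1) :
    ‖x ^ p - 1‖ ≤ max ((p:ℝ)⁻¹) ‖x - 1‖ * ‖x - 1‖ := by
  set u := x - 1 with hu
  have hu1 : ‖u‖ ≤ 1 := hx.le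
  have hxu : x = u + 1 := by rw [hu]; ring
  have hexp : x ^ p - 1 = ∑ k ∈ range p, u ^ (k+1) * (p.choose (k+1) : ℚ_[p]) := by
    rw [hxu, add_pow, Finset.sum_range_succ']
    simp
  rw [hexp]
  have hC0 : (0:ℝ) ≤ max ((p:ℝ)⁻¹) ‖u‖ * ‖u‖ :=
    mul_nonneg (le_trans (by positivity) (le_max_left _ _)) (norm_nonneg _)
  refine norm_sum_le_of_forall_le_of_nonneg hC0 ?_
  intro k hk
  rw [Finset.mem_range] at hk
  rw [norm_mul, norm_pow]
  rcases eq_or_lt_of_le (Nat.succ_le_of_lt hk) with he | hlt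
  · have h1 : p.choose (k+1) = 1 := by rw [← he]; exact Nat.choose_self _
    rw [h1]
    simp only [Nat.cast_one, norm_one, mul_one]
    calc ‖u‖ ^ (k+1) ≤ ‖u‖ ^ 2 := by
          refine pow_le_pow_of_le_one (norm_nonneg _) hu1 ?_
          have := hpp.out.two_le
          omega
      _ = ‖u‖ * ‖u‖ := sq ‖u‖
      _ ≤ max ((p:ℝ)⁻¹) ‖u‖ * ‖u‖ :=
          mul_le_mul_of_nonneg_right (le_max_right _ _) (norm_nonneg _)
  · calc ‖u‖ ^ (k+1) * ‖((p.choose (k+1) : ℕ) : ℚ_[p])‖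
        ≤ ‖u‖ * (p:ℝ)⁻¹ := by
          refine mul_le_mul ?_ (FA.norm_choose_le (Nat.succ_ne_zero k) hlt) (norm_nonneg _)
            (norm_nonneg _)
          calc ‖u‖^(k+1) ≤ ‖u‖^1 := pow_le_pow_of_le_one (norm_nonneg _) hu1 (by omega)
            _ = ‖u‖ := pow_one _
      _ = (p:ℝ)⁻¹ * ‖u‖ := mul_comm _ _
      _ ≤ max ((p:ℝ)⁻¹) ‖u‖ * ‖u‖ :=
          mul_le_mul_of_nonneg_right (le_max_left _ _) (norm_nonneg _)

private lemma FA.pinv_lt_one : ((p:ℝ))⁻¹ < 1 := by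
  rw [inv_lt_one_iff₀]; right; exact_mod_cast hpp.out.one_lt

private lemma FA.r_lt_one {q : ℚ_[p]} (hq : ‖1 - q‖ < 1) : max ((p:ℝ)⁻¹) ‖1 - q‖ < 1 :=
  max_lt FA.pinv_lt_one hq

private lemma FA.norm_q_pow_p_pow_sub_one {q : ℚ_[p]} (hq : ‖1 - q‖ < 1) (N : ℕ) :
    ‖q ^ (p ^ N) - 1‖ ≤ (max ((p:ℝ)⁻¹) ‖1 - q‖) ^ N * ‖1 - q‖ := by
  set r := max ((p:ℝ)⁻¹) ‖1 - q‖ with hr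
  have hr0 : 0 ≤ r := le_trans (by positivity) (le_max_left _ _)
  have hr1 : r < 1 := FA.r_lt_one hq
  induction N with
  | zero => simp [norm_sub_rev]
  | succ N ih =>
    have hle1 : ‖q ^ (p ^ N) - 1‖ ≤ ‖1 - q‖ := by
      refine ih.trans ?_
      calc r ^ N * ‖1 - q‖ ≤ 1 * ‖1 - q‖ :=
            mul_le_mul_of_nonneg_right (pow_le_one₀ hr0 hr1.le) (norm_nonneg _)
        _ = ‖1 - q‖ := one_mul _
    have hlt1 : ‖q ^ (p ^ N) - 1‖ < 1 := lt_of_le_of_lt hle1 hq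
    have key := FA.norm_pow_p_sub_one hlt1
    rw [← pow_mul, ← pow_succ] at key
    refine key.trans ?_
    have hmax : max ((p:ℝ)⁻¹) ‖q ^ (p ^ N) - 1‖ ≤ r :=
      max_le (le_max_left _ _) (hle1.trans (le_max_right _ _))
    calc max ((p:ℝ)⁻¹) ‖q ^ (p ^ N) - 1‖ * ‖q ^ (p ^ N) - 1‖
        ≤ r * (r ^ N * ‖1 - q‖) := mul_le_mul hmax ih (norm_nonneg _) hr0
      _ = r ^ (N + 1) * ‖1 - q‖ := by ring

private lemma FA.tendsto_rN {q : ℚ_[p]} (hq : ‖1 - q‖ < 1) (c : ℝ) :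
    Tendsto (fun N : ℕ => (max ((p:ℝ)⁻¹) ‖1 - q‖) ^ N * c) atTop (𝓝 0) := by
  have hr0 : 0 ≤ max ((p:ℝ)⁻¹) ‖1 - q‖ := le_trans (by positivity) (le_max_left _ _)
  have := (tendsto_pow_atTop_nhds_zero_of_lt_one hr0 (FA.r_lt_one hq)).mul_const c
  simpa using this

private lemma FA.tendsto_q_pow {q : ℚ_[p]} (hq : ‖1 - q‖ < 1) :
    Tendsto (fun N : ℕ => q ^ (p ^ N)) atTop (𝓝 1) := by
  rw [tendsto_iff_norm_sub_tendsto_zero]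
  exact squeeze_zero (fun N => norm_nonneg _) (fun N => FA.norm_q_pow_p_pow_sub_one hq N)
    (FA.tendsto_rN hq _)

private lemma FA.norm_p_pow_int (N : ℕ) : ‖((p:ℤ_[p]))^N‖ = ((p:ℝ)⁻¹)^N := by
  rw [PadicInt.norm_p_pow, zpow_neg, inv_pow, zpow_natCast]

private lemma FA.tendsto_p_pow_zero : Tendsto (fun N : ℕ => ((p:ℤ_[p]))^N) atTop (𝓝 0) := by
  rw [tendsto_zero_iff_norm_tendsto_zero]
  simp only [FA.norm_p_pow_int]
  exact tendsto_pow_atTop_nhds_zero_of_lt_one (by positivity) FA.pinv_lt_one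

private lemma FA.exists_tendsto_sum (hp : Odd p) {q : ℚ_[p]} (hq : ‖1 - q‖ < 1)
    (g : ℤ_[p] → ℚ_[p]) (hg : Continuous g) :
    ∃ L, Tendsto (fun N : ℕ => ∑ x ∈ range (p ^ N), g (x : ℤ_[p]) * (-q) ^ x) atTop (𝓝 L) := by
  have hnq : ‖-q‖ = 1 := by rw [norm_neg, FA.norm_q_eq_one hq]
  set A : ℕ → ℚ_[p] := fun N => ∑ x ∈ range (p ^ N), g (x : ℤ_[p]) * (-q) ^ x with hA
  set b : ℕ → ℚ_[p] := fun N => A (N + 1) - A N with hb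
  obtain ⟨x₀, hx₀⟩ := (continuous_norm.comp hg).exists_forall_ge' (0 : ℤ_[p])
    (by simp [Filter.cocompact_eq_bot])
  set M : ℝ := ‖g x₀‖ with hM
  have hM0 : 0 ≤ M := norm_nonneg _
  have hMb : ∀ x : ℤ_[p], ‖g x‖ ≤ M := fun x => hx₀ x
  have hSbound : ∀ (s : Finset ℕ) (h : ℕ → ℤ_[p]), ‖∑ i ∈ s, g (h i) * (-q) ^ i‖ ≤ M := by
    intro s h
    refine norm_sum_le_of_forall_le_of_nonneg hM0 ?_
    intro i _
    rw [norm_mul, norm_pow, hnq, one_pow, mul_one]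
    exact hMb _
  have htb : Tendsto b atTop (𝓝 0) := by
    rw [NormedAddCommGroup.tendsto_nhds_zero]
    intro ε hε
    obtain ⟨δ, hδ0, hδ⟩ := Metric.uniformContinuous_iff.mp
      (CompactSpace.uniformContinuous_of_continuous hg) (ε/2) (by positivity)
    have h1 := (FA.tendsto_rN hq (‖1 - q‖ * M)).eventually_lt_const (by positivity : (0:ℝ) < ε/2)
    have h2 := (tendsto_pow_atTop_nhds_zero_of_lt_one (by positivity) (FA.pinv_lt_one (p := p))
      ).eventually_lt_const hδ0
    filter_upwards [h1, h2] with N hN1 hN2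
    set r : ℝ := max ((p:ℝ)⁻¹) ‖1 - q‖ with hr
    set Q : ℚ_[p] := q ^ (p ^ N) with hQdef
    have hoddpN : Odd (p ^ N) := hp.pow
    have hQpow : (-q) ^ (p ^ N) = -Q := hoddpN.neg_pow q
    set S : ℕ → ℚ_[p] := fun j => ∑ i ∈ range (p ^ N), g ((j * p ^ N + i : ℕ) : ℤ_[p]) * (-q) ^ i
      with hS
    have hS0 : S 0 = A N := by simp [hS, hA]
    have hsplit : A (N + 1) = ∑ j ∈ range p, (-1 : ℚ_[p]) ^ j * (Q ^ j * S j) := by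
      have hpow : p ^ (N + 1) = p * p ^ N := by ring
      rw [hA]
      simp only
      rw [hpow, FA.sum_range_mul]
      refine Finset.sum_congr rfl fun j _ => ?_
      rw [hS]
      simp only
      rw [Finset.mul_sum, Finset.mul_sum]
      refine Finset.sum_congr rfl fun i _ => ?_
      have h3 : (-q) ^ (j * p ^ N + i) = ((-1 : ℚ_[p]) ^ j * Q ^ j) * (-q) ^ i := by
        rw [pow_add, mul_comm j (p ^ N), pow_mul, hQpow, neg_pow]
      rw [h3]; ring
    have hgeo : ∑ j ∈ range p, (-1 : ℚ_[p]) ^ j = 1 := by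
      rw [neg_one_geom_sum, if_neg (Nat.not_even_iff_odd.mpr hp)]
    have hbN : b N = ∑ j ∈ range p, (-1 : ℚ_[p]) ^ j * (Q ^ j * S j - S 0) := by
      rw [hb]
      simp only
      rw [hsplit, hS0.symm]
      calc (∑ j ∈ range p, (-1 : ℚ_[p]) ^ j * (Q ^ j * S j)) - S 0
          = (∑ j ∈ range p, (-1 : ℚ_[p]) ^ j * (Q ^ j * S j))
            - (∑ j ∈ range p, (-1 : ℚ_[p]) ^ j) * S 0 := by rw [hgeo, one_mul]
        _ = ∑ j ∈ range p, (-1 : ℚ_[p]) ^ j * (Q ^ j * S j - S 0) := by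
            rw [Finset.sum_mul, ← Finset.sum_sub_distrib]
            exact Finset.sum_congr rfl fun j _ => by ring
    rw [hbN]
    have hbound : ‖∑ j ∈ range p, (-1 : ℚ_[p]) ^ j * (Q ^ j * S j - S 0)‖ ≤ ε/2 := by
      refine norm_sum_le_of_forall_le_of_nonneg (by positivity) ?_
      intro j _
      rw [norm_mul, norm_pow, norm_neg, norm_one, one_pow, one_mul]
      have hdecomp : Q ^ j * S j - S 0 = (Q ^ j - 1) * S j + (S j - S 0) := by ring
      rw [hdecomp]
      refine (norm_add_le_max _ _).trans (max_le ?_ ?_)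
      · rw [norm_mul]
        have hQ1 : ‖Q‖ ≤ 1 := by
          rw [hQdef, norm_pow, FA.norm_q_eq_one hq, one_pow]
        have h3 : ‖Q ^ j - 1‖ ≤ r ^ N * ‖1 - q‖ :=
          (FA.norm_pow_sub_one_le hQ1 j).trans (FA.norm_q_pow_p_pow_sub_one hq N)
        calc ‖Q ^ j - 1‖ * ‖S j‖ ≤ (r ^ N * ‖1 - q‖) * M :=
              mul_le_mul h3 (hSbound _ _) (norm_nonneg _) (by positivity)
          _ = r ^ N * (‖1 - q‖ * M) := by ring
          _ ≤ ε/2 := by rw [hr]; exact hN1.le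
      · have h4 : S j - S 0 = ∑ i ∈ range (p ^ N),
            (g ((j * p ^ N + i : ℕ) : ℤ_[p]) - g ((i : ℕ) : ℤ_[p])) * (-q) ^ i := by
          rw [hS]
          simp only
          rw [← Finset.sum_sub_distrib]
          refine Finset.sum_congr rfl fun i _ => ?_
          push_cast
          ring
        rw [h4]
        refine norm_sum_le_of_forall_le_of_nonneg (by positivity) ?_
        intro i _
        rw [norm_mul, norm_pow, hnq, one_pow, mul_one]
        have hdist : dist ((j * p ^ N + i : ℕ) : ℤ_[p]) ((i : ℕ) : ℤ_[p]) < δ := by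
          rw [dist_eq_norm]
          have hcast : ((j * p ^ N + i : ℕ) : ℤ_[p]) - ((i : ℕ) : ℤ_[p])
              = (j : ℤ_[p]) * (p : ℤ_[p]) ^ N := by push_cast; ring
          rw [hcast, norm_mul]
          calc ‖(j : ℤ_[p])‖ * ‖(p : ℤ_[p]) ^ N‖ ≤ 1 * ‖(p : ℤ_[p]) ^ N‖ :=
                mul_le_mul_of_nonneg_right (PadicInt.norm_le_one _) (norm_nonneg _)
            _ = ((p:ℝ)⁻¹) ^ N := by rw [one_mul, FA.norm_p_pow_int]
            _ < δ := hN2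
        have h5 := hδ hdist
        rw [dist_eq_norm] at h5
        exact h5.le
    exact lt_of_le_of_lt hbound (by linarith)
  have hsum : Summable b := NonarchimedeanAddGroup.summable_of_tendsto_cofinite_zero
    (by rwa [Nat.cofinite_eq_atTop])
  refine ⟨(∑' k, b k) + A 0, ?_⟩
  have hTel : ∀ N, A N = (∑ k ∈ range N, b k) + A 0 := by
    intro N
    rw [hb]
    simp only
    rw [Finset.sum_range_sub (f := A)]
    ring
  exact (hsum.hasSum.tendsto_sum_nat.add_const (A 0)).congr fun N => (hTel N).symm

end FermAux

/-- For an odd prime `p`, `q ∈ ℚ_p` with `|1-q|_p < 1`, a positive integer `n`, and continuous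
`f : ℤ_p → ℚ_p`, the fermionic `p`-adic `q`-integrals of `f` and of `fₙ(x) = f(x+n)` exist and
`q^n I₋q(fₙ) + (-1)^{n-1} I₋q(f) = [2]_q ∑_{l=0}^{n-1} (-1)^{n-1-l} q^l f(l)`;
in particular, if `n` is odd, `q^n I₋q(fₙ) + I₋q(f) = [2]_q ∑_{l=0}^{n-1} (-1)^l q^l f(l)`. -/
theorem fermionic_q_integral_shift_n (p : ℕ) [Fact (Nat.Prime p)] (hp : Odd p)
    (q : ℚ_[p]) (hq : ‖1 - q‖ < 1) (n : ℕ) (hn : 0 < n)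
    (f : ℤ_[p] → ℚ_[p]) (hf : Continuous f) :
    ∃ I In : ℚ_[p],
      Tendsto (fun N : ℕ =>
          ((1 + q) / (1 - (-q) ^ (p ^ N))) * ∑ x ∈ range (p ^ N), f (x : ℤ_[p]) * (-q) ^ x)
        atTop (nhds I) ∧
      Tendsto (fun N : ℕ =>
          ((1 + q) / (1 - (-q) ^ (p ^ N))) * ∑ x ∈ range (p ^ N), f ((x : ℤ_[p]) + n) * (-q) ^ x)
        atTop (nhds In) ∧
      q ^ n * In + (-1 : ℚ_[p]) ^ (n - 1) * I
        = (1 + q) * ∑ l ∈ range n, (-1 : ℚ_[p]) ^ (n - 1 - l) * q ^ l * f (l : ℤ_[p]) ∧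
      (Odd n →
        q ^ n * In + I = (1 + q) * ∑ l ∈ range n, (-1 : ℚ_[p]) ^ l * q ^ l * f (l : ℤ_[p])) := by
  classical
  obtain ⟨LA, hLA⟩ := FA.exists_tendsto_sum hp hq f hf
  have hgc : Continuous (fun y : ℤ_[p] => f (y + (n : ℤ_[p]))) :=
    hf.comp (continuous_add_right _)
  obtain ⟨LB, hLB⟩ := FA.exists_tendsto_sum hp hq _ hgc
  -- the prefactor converges to (1+q)/2
  have hden : Tendsto (fun N : ℕ => 1 - (-q) ^ (p ^ N)) atTop (𝓝 2) := by
    have h1 : ∀ N : ℕ, 1 + q ^ (p ^ N) = 1 - (-q) ^ (p ^ N) := by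
      intro N
      rw [(Odd.pow hp : Odd (p ^ N)).neg_pow]
      ring
    have h2 : Tendsto (fun N : ℕ => 1 + q ^ (p ^ N)) atTop (𝓝 2) := by
      have := (tendsto_const_nhds (x := (1:ℚ_[p])) (f := atTop (α := ℕ))).add
        (FA.tendsto_q_pow hq)
      norm_num at this
      exact this
    exact h2.congr h1
  have hP : Tendsto (fun N : ℕ => (1 + q) / (1 - (-q) ^ (p ^ N))) atTop (𝓝 ((1 + q) / 2)) :=
    tendsto_const_nhds.div hden two_ne_zero
  set C : ℚ_[p] := ∑ l ∈ range n, f (l : ℤ_[p]) * (-q) ^ l with hC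
  have hsign : ((-1:ℚ_[p])) ^ n = -(-1:ℚ_[p]) ^ (n-1) := by
    conv_lhs => rw [show n = (n-1)+1 from by omega]
    rw [pow_succ]; ring
  have key : ∀ N : ℕ,
      q ^ n * (∑ x ∈ range (p ^ N), f ((x:ℤ_[p]) + n) * (-q) ^ x)
        + (-1:ℚ_[p]) ^ (n-1) * (∑ x ∈ range (p ^ N), f (x:ℤ_[p]) * (-q) ^ x)
      = (-1:ℚ_[p]) ^ n *
          ((-(q ^ (p ^ N))) * (∑ l ∈ range n, f ((p:ℤ_[p])^N + (l:ℤ_[p])) * (-q) ^ l) - C) := by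
    intro N
    have h4 : ((-1:ℚ_[p])^n) * ((-1:ℚ_[p])^n) = 1 := by
      rw [← pow_add]
      exact Even.neg_one_pow ⟨n, rfl⟩
    have e1 : q ^ n * (∑ x ∈ range (p^N), f ((x:ℤ_[p]) + n) * (-q) ^ x)
        = (-1:ℚ_[p])^n * ∑ x ∈ range (p^N), f (((n+x:ℕ)):ℤ_[p]) * (-q)^(n+x) := by
      rw [Finset.mul_sum, Finset.mul_sum]
      refine Finset.sum_congr rfl fun x _ => ?_
      have hc : (((n + x : ℕ)) : ℤ_[p]) = (x:ℤ_[p]) + (n:ℤ_[p]) := by push_cast; ring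
      rw [hc, pow_add, neg_pow q n]
      calc q ^ n * (f ((x:ℤ_[p]) + n) * (-q) ^ x)
          = (((-1:ℚ_[p])^n) * ((-1:ℚ_[p])^n)) * (q ^ n * (f ((x:ℤ_[p]) + n) * (-q) ^ x)) := by
            rw [h4, one_mul]
        _ = (-1:ℚ_[p])^n * (f ((x:ℤ_[p]) + (n:ℤ_[p])) * ((-1:ℚ_[p])^n * q^n * (-q)^x)) := by
            ring
    have e2 : ∑ x ∈ range (p^N), f (((n+x:ℕ)):ℤ_[p]) * (-q)^(n+x)
        = (∑ y ∈ range (n + p^N), f ((y:ℤ_[p])) * (-q)^y)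
          - ∑ y ∈ range n, f ((y:ℤ_[p])) * (-q)^y := by
      rw [Finset.sum_range_add (fun y => f ((y:ℤ_[p])) * (-q)^y) n (p^N)]
      ring
    have e3 : ∑ y ∈ range (n + p^N), f ((y:ℤ_[p])) * (-q)^y
        = (∑ x ∈ range (p^N), f ((x:ℤ_[p])) * (-q)^x)
          + ∑ l ∈ range n, f (((p^N + l : ℕ)):ℤ_[p]) * (-q)^(p^N + l) := by
      rw [add_comm n (p^N), Finset.sum_range_add (fun y => f ((y:ℤ_[p])) * (-q)^y) (p^N) n]
    have e4 : ∑ l ∈ range n, f (((p^N + l : ℕ)):ℤ_[p]) * (-q)^(p^N + l)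
        = -(q^(p^N)) * ∑ l ∈ range n, f ((p:ℤ_[p])^N + (l:ℤ_[p])) * (-q)^l := by
      rw [Finset.mul_sum]
      refine Finset.sum_congr rfl fun l _ => ?_
      have hc : (((p^N + l : ℕ)) : ℤ_[p]) = (p:ℤ_[p])^N + (l:ℤ_[p]) := by push_cast; ring
      rw [hc, pow_add, (Odd.pow hp : Odd (p^N)).neg_pow]
      ring
    rw [e1, e2, e3, e4, hC, hsign]
    ring
  -- limit of the tail sums
  have hTl : Tendsto (fun N : ℕ => ∑ l ∈ range n, f ((p:ℤ_[p])^N + (l:ℤ_[p])) * (-q)^l)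
      atTop (𝓝 C) := by
    rw [hC]
    refine tendsto_finset_sum _ fun l _ => ?_
    have harg : Tendsto (fun N : ℕ => (p:ℤ_[p])^N + (l:ℤ_[p])) atTop (𝓝 ((l:ℤ_[p]))) := by
      have := FA.tendsto_p_pow_zero (p := p).add_const ((l:ℤ_[p]))
      simpa using this
    exact (((hf.tendsto _).comp harg)).mul_const _
  have hE : Tendsto (fun N : ℕ => (-1:ℚ_[p]) ^ n *
      ((-(q ^ (p ^ N))) * (∑ l ∈ range n, f ((p:ℤ_[p])^N + (l:ℤ_[p])) * (-q) ^ l) - C))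
      atTop (𝓝 ((-1:ℚ_[p])^n * ((-1) * C - C))) :=
    tendsto_const_nhds.mul ((((FA.tendsto_q_pow hq).neg).mul hTl).sub tendsto_const_nhds)
  have hcomb : Tendsto (fun N : ℕ =>
      ((1 + q) / (1 - (-q) ^ (p ^ N)))
        * (q ^ n * (∑ x ∈ range (p ^ N), f ((x:ℤ_[p]) + n) * (-q) ^ x)
           + (-1:ℚ_[p]) ^ (n-1) * (∑ x ∈ range (p ^ N), f (x:ℤ_[p]) * (-q) ^ x)))
      atTop (𝓝 (q ^ n * ((1 + q) / 2 * LB) + (-1:ℚ_[p]) ^ (n-1) * ((1 + q) / 2 * LA))) := by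
    have := (tendsto_const_nhds (x := q ^ n) (f := atTop (α := ℕ))).mul (hP.mul hLB)
      |>.add ((tendsto_const_nhds (x := (-1:ℚ_[p]) ^ (n-1)) (f := atTop (α := ℕ))).mul
        (hP.mul hLA))
    exact this.congr fun N => by ring
  have hcomb2 : Tendsto (fun N : ℕ =>
      ((1 + q) / (1 - (-q) ^ (p ^ N)))
        * (q ^ n * (∑ x ∈ range (p ^ N), f ((x:ℤ_[p]) + n) * (-q) ^ x)
           + (-1:ℚ_[p]) ^ (n-1) * (∑ x ∈ range (p ^ N), f (x:ℤ_[p]) * (-q) ^ x)))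
      atTop (𝓝 ((1 + q) / 2 * ((-1:ℚ_[p])^n * ((-1) * C - C)))) :=
    hP.mul (hE.congr fun N => (key N).symm)
  have huniq := tendsto_nhds_unique hcomb hcomb2
  have h2ne : (2:ℚ_[p]) ≠ 0 := two_ne_zero
  have hRHS : (1 + q) / 2 * ((-1:ℚ_[p])^n * ((-1) * C - C))
      = (1 + q) * ((-1:ℚ_[p])^(n-1) * C) := by
    calc (1 + q) / 2 * ((-1:ℚ_[p])^n * ((-1) * C - C))
        = ((1 + q) / 2 * 2) * ((-1:ℚ_[p])^(n-1) * C) := by rw [hsign]; ring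
      _ = (1 + q) * ((-1:ℚ_[p])^(n-1) * C) := by rw [div_mul_cancel₀ _ h2ne]
  have hCsum : (-1:ℚ_[p])^(n-1) * C
      = ∑ l ∈ range n, (-1 : ℚ_[p]) ^ (n - 1 - l) * q ^ l * f (l : ℤ_[p]) := by
    rw [hC, Finset.mul_sum]
    refine Finset.sum_congr rfl fun l hl => ?_
    rw [Finset.mem_range] at hl
    rw [neg_pow q l]
    have h8 : ((-1:ℚ_[p]))^(n-1) * (-1:ℚ_[p])^l = (-1:ℚ_[p])^(n-1-l) := by
      rw [← pow_add, show n-1+l = (n-1-l) + 2*l from by omega, pow_add, pow_mul, neg_one_sq,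
        one_pow, mul_one]
    calc (-1:ℚ_[p])^(n-1) * (f (l:ℤ_[p]) * ((-1:ℚ_[p])^l * q^l))
        = ((-1:ℚ_[p])^(n-1) * (-1:ℚ_[p])^l) * q^l * f (l:ℤ_[p]) := by ring
      _ = (-1:ℚ_[p])^(n-1-l) * q^l * f (l:ℤ_[p]) := by rw [h8]
  have hmain : q ^ n * ((1 + q) / 2 * LB) + (-1:ℚ_[p]) ^ (n-1) * ((1 + q) / 2 * LA)
      = (1 + q) * ∑ l ∈ range n, (-1 : ℚ_[p]) ^ (n - 1 - l) * q ^ l * f (l : ℤ_[p]) := by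
    rw [huniq, hRHS, hCsum]
  refine ⟨(1 + q) / 2 * LA, (1 + q) / 2 * LB, hP.mul hLA, hP.mul hLB, hmain, ?_⟩
  intro hon
  have hev : Even (n-1) := Nat.Odd.sub_odd hon odd_one
  have h9 : ((-1:ℚ_[p]))^(n-1) = 1 := Even.neg_one_pow hev
  rw [h9, one_mul] at hmain
  rw [hmain]
  refine congrArg _ (Finset.sum_congr rfl fun l hl => ?_)
  rw [Finset.mem_range] at hl
  have ha : ((-1:ℚ_[p]))^(n-1-l) * (-1:ℚ_[p])^l = 1 := by
    rw [← pow_add, show n-1-l+l = n-1 from by omega]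
    exact hev.neg_one_pow
  have hb : ((-1:ℚ_[p]))^l * (-1:ℚ_[p])^l = 1 := by
    rw [← pow_add]
    exact Even.neg_one_pow ⟨l, rfl⟩
  have hcc : (-1:ℚ_[p])^(n-1-l) = (-1:ℚ_[p])^l := by
    calc (-1:ℚ_[p])^(n-1-l) = (-1:ℚ_[p])^(n-1-l) * ((-1:ℚ_[p])^l * (-1:ℚ_[p])^l) := by
          rw [hb, mul_one]
      _ = ((-1:ℚ_[p])^(n-1-l) * (-1:ℚ_[p])^l) * (-1:ℚ_[p])^l := by ring
      _ = (-1:ℚ_[p])^l := by rw [ha, one_mul]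
  rw [hcc]
end

section
/- (Witt's formula for q-Euler numbers) Let p be an odd prime and q ∈ ℚ_p with |1 − q|_p < 1. For every n ≥ 0, the limit lim_{N→∞} (1/[p^N]_{−q})·Σ_{x=0}^{p^N−1} x^n (−q)^x exists in ℚ_p and equals the q-Euler number E_{n,q}. -/
open Filter Finset

/-!
Write `T_N(n) = [2]_q / [p^N]_{-q} · ∑_{x < p^N} x^n (-q)^x`. Telescoping
`∑_x (x^n (-q)^x - (x+1)^n (-q)^(x+1))` and expanding `(x+1)^n` shows that `T_N` satisfies the
`q`-Euler recurrence up to the error `-[2]_q / [p^N]_{-q} · p^{Nn} (-q)^{p^N}`, while `T_N(0) = 1`.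
As `p` is odd, `|2|_p = 1`, hence `|1 + q|_p = |1 + q^{p^N}|_p = 1`, so the error has norm `p^{-Nn}`
and tends to `0` for `n ≥ 1`. Since `1 + q ≠ 0`, the recurrence can be solved for its top term,
and strong induction on `n` gives `T_N(n) → E_{n,q}`.
-/

open IsUltrametricDist Topology

lemma norm_sub_eq_left_of_norm_lt {S : Type*} [SeminormedAddGroup S] [IsUltrametricDist S]
    {a b : S} (h : ‖b‖ < ‖a‖) : ‖a - b‖ = ‖a‖ := by
  rw [sub_eq_add_neg, norm_add_eq_max_of_norm_ne_norm (by rw [norm_neg]; exact h.ne'),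
    norm_neg, max_eq_left h.le]

section Ultrametric

variable {R : Type*} [NormedRing R] [IsUltrametricDist R] {u : R}

lemma norm_one_add_eq_one (h2 : ‖(2 : R)‖ = 1) (hu : ‖1 - u‖ < 1) : ‖1 + u‖ = 1 := by
  rw [show 1 + u = 2 - (1 - u) by rw [← one_add_one_eq_two]; abel,
    norm_sub_eq_left_of_norm_lt (h2 ▸ hu), h2]

variable [NormOneClass R]

lemma norm_eq_one_of_norm_one_sub_lt_one (hu : ‖1 - u‖ < 1) : ‖u‖ = 1 := by
  simpa using norm_sub_eq_left_of_norm_lt (a := (1 : R)) (b := 1 - u) (by rwa [norm_one])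

lemma norm_one_sub_pow_lt_one (hu : ‖1 - u‖ < 1) (m : ℕ) : ‖1 - u ^ m‖ < 1 := by
  have hsum : ‖∑ i ∈ range m, u ^ i‖ ≤ 1 :=
    norm_sum_le_of_forall_le_of_nonneg zero_le_one fun i _ =>
      (norm_pow_le u i).trans (by rw [norm_eq_one_of_norm_one_sub_lt_one hu, one_pow])
  calc ‖1 - u ^ m‖ = ‖(1 - u) * ∑ i ∈ range m, u ^ i‖ := by rw [mul_neg_geom_sum]
    _ ≤ ‖1 - u‖ * ‖∑ i ∈ range m, u ^ i‖ := norm_mul_le _ _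
    _ ≤ ‖1 - u‖ := mul_le_of_le_one_right (norm_nonneg _) hsum
    _ < 1 := hu

end Ultrametric

lemma Padic.norm_two_eq_one {p : ℕ} [Fact p.Prime] (hp : Odd p) : ‖(2 : ℚ_[p])‖ = 1 := by
  exact_mod_cast Padic.norm_natCast_eq_one_iff.mpr (Nat.coprime_two_right.mpr hp)

lemma sum_choose_mul_sum_pow_mul_neg_pow {R : Type*} [CommRing R] (q : R) {n : ℕ} (hn : n ≠ 0)
    (M : ℕ) :
    q * ∑ k ∈ range (n + 1), (n.choose k : R) * ∑ x ∈ range M, (x : R) ^ k * (-q) ^ x +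
      ∑ x ∈ range M, (x : R) ^ n * (-q) ^ x = -((M : R) ^ n * (-q) ^ M) := by
  have hbinom : ∑ k ∈ range (n + 1), (n.choose k : R) * ∑ x ∈ range M, (x : R) ^ k * (-q) ^ x
      = ∑ x ∈ range M, ((x : R) + 1) ^ n * (-q) ^ x := by
    simp_rw [mul_sum, add_pow, sum_mul]
    rw [sum_comm]
    refine sum_congr rfl fun x _ => sum_congr rfl fun k _ => by ring
  have htele := sum_range_sub' (fun x : ℕ => (x : R) ^ n * (-q) ^ x) M
  rw [Nat.cast_zero, zero_pow hn, zero_mul, zero_sub] at htele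
  rw [hbinom, mul_sum, ← sum_add_distrib, ← htele]
  refine sum_congr rfl fun x _ => ?_
  push_cast
  ring

lemma tendsto_of_binomial_recurrence {K : Type*} [Field K] [TopologicalSpace K]
    [IsTopologicalRing K] {q : K} (hq : 1 + q ≠ 0) {T : ℕ → ℕ → K} {E : ℕ → K}
    (hE : ∀ n, 1 ≤ n → q * ∑ k ∈ range (n + 1), (n.choose k : K) * E k + E n = 0)
    (hT0 : Tendsto (T 0) atTop (𝓝 (E 0)))
    (hT : ∀ n, 1 ≤ n →
      Tendsto (fun N => q * ∑ k ∈ range (n + 1), (n.choose k : K) * T k N + T n N) atTop (𝓝 0))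
    (n : ℕ) :
    Tendsto (T n) atTop (𝓝 (E n)) := by
  induction n using Nat.strong_induction_on with
  | _ n ih =>
  obtain rfl | hn := n.eq_zero_or_pos
  · exact hT0
  have hlower : Tendsto (fun N => q * ∑ k ∈ range n, (n.choose k : K) * T k N) atTop
      (𝓝 (q * ∑ k ∈ range n, (n.choose k : K) * E k)) :=
    (tendsto_finsetSum _ fun k hk => (ih k (mem_range.mp hk)).const_mul _).const_mul q
  have hscaled : Tendsto (fun N => (1 + q) * T n N) atTop (𝓝 ((1 + q) * E n)) := by
    convert (hT n hn).sub hlower using 1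
    · funext N
      rw [sum_range_succ, Nat.choose_self]
      ring
    · have hEn := hE n hn
      rw [sum_range_succ, Nat.choose_self] at hEn
      congr 1
      linear_combination hEn
  simpa [inv_mul_cancel_left₀ hq] using hscaled.const_mul (1 + q)⁻¹

section QFermionicSum

variable {K : Type*} [Field K]

/-- The paper's `(1 / [M]_{-q}) ∑_{x < M} x^n (-q)^x`, written with
`1 / [M]_{-q} = [2]_q / (1 - (-q)^M)`. -/
def qFermionicSum (q : K) (M n : ℕ) : K :=
  (1 + q) / (1 - (-q) ^ M) * ∑ x ∈ range M, (x : K) ^ n * (-q) ^ x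

lemma qFermionicSum_zero {q : K} {M : ℕ} (hM : 1 - (-q) ^ M ≠ 0) : qFermionicSum q M 0 = 1 := by
  simp only [qFermionicSum, pow_zero, one_mul]
  rw [div_mul_eq_mul_div, ← sub_neg_eq_add, mul_neg_geom_sum, div_self hM]

lemma qFermionicSum_recurrence (q : K) {n : ℕ} (hn : n ≠ 0) (M : ℕ) :
    q * ∑ k ∈ range (n + 1), (n.choose k : K) * qFermionicSum q M k + qFermionicSum q M n =
      -((1 + q) / (1 - (-q) ^ M) * (M : K) ^ n * (-q) ^ M) := by
  simp only [qFermionicSum, mul_left_comm _ ((1 + q) / (1 - (-q) ^ M)), ← mul_sum]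
  linear_combination (1 + q) / (1 - (-q) ^ M) * sum_choose_mul_sum_pow_mul_neg_pow q hn M

end QFermionicSum

section Padic

variable {p : ℕ} [Fact p.Prime] {q : ℚ_[p]}

lemma norm_one_sub_neg_pow_eq_one (hp : Odd p) (hq : ‖1 - q‖ < 1) {M : ℕ} (hM : Odd M) :
    ‖1 - (-q) ^ M‖ = 1 := by
  rw [hM.neg_pow, sub_neg_eq_add]
  exact norm_one_add_eq_one (Padic.norm_two_eq_one hp) (norm_one_sub_pow_lt_one hq M)

lemma tendsto_qFermionicSum_recurrence_defect (hp : Odd p) (hq : ‖1 - q‖ < 1) {n : ℕ}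
    (hn : n ≠ 0) :
    Tendsto (fun N => q * ∑ k ∈ range (n + 1), (n.choose k : ℚ_[p]) * qFermionicSum q (p ^ N) k +
      qFermionicSum q (p ^ N) n) atTop (𝓝 0) := by
  simp only [qFermionicSum_recurrence q hn]
  have hpow : Tendsto (fun N => ((p ^ N : ℕ) : ℚ_[p]) ^ n) atTop (𝓝 0) := by
    simpa [zero_pow hn] using
      (tendsto_pow_atTop_nhds_zero_of_norm_lt_one Padic.norm_p_lt_one).pow n
  have hbdd (N : ℕ) : ‖(1 + q) / (1 - (-q) ^ p ^ N) * (-q) ^ p ^ N‖ ≤ 1 := by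
    rw [norm_mul, norm_div, norm_one_add_eq_one (Padic.norm_two_eq_one hp) hq,
      norm_one_sub_neg_pow_eq_one hp hq hp.pow, norm_pow, norm_neg,
      norm_eq_one_of_norm_one_sub_lt_one hq]
    norm_num
  rw [← neg_zero]
  refine (hpow.zero_mul_isBoundedUnder_le (isBoundedUnder_of ⟨1, hbdd⟩)).neg.congr fun N => ?_
  ring

end Padic

/-- Witt's formula for the `q`-Euler numbers: for an odd prime `p` and `q ∈ ℚ_p` with
`|1-q|_p < 1`, if `E : ℕ → ℚ_p` are the `q`-Euler numbers (`E 0 = 1` and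
`q ∑_{k=0}^n C(n,k) E k + E n = 0` for `n ≥ 1`), then for every `n ≥ 0`,
`lim_N (1/[p^N]₋q) ∑_{x=0}^{p^N-1} x^n (-q)^x = E n`. -/
theorem witt_formula_q_euler_numbers (p : ℕ) [Fact (Nat.Prime p)] (hp : Odd p)
    (q : ℚ_[p]) (hq : ‖1 - q‖ < 1)
    (E : ℕ → ℚ_[p]) (hE0 : E 0 = 1)
    (hE : ∀ m : ℕ, 1 ≤ m →
      q * ∑ k ∈ range (m + 1), (m.choose k : ℚ_[p]) * E k + E m = 0)
    (n : ℕ) :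
    Tendsto (fun N : ℕ =>
        ((1 + q) / (1 - (-q) ^ (p ^ N))) * ∑ x ∈ range (p ^ N), (x : ℚ_[p]) ^ n * (-q) ^ x)
      atTop (nhds (E n)) := by
  have hq' : 1 + q ≠ 0 := norm_ne_zero_iff.mp <| by
    rw [norm_one_add_eq_one (Padic.norm_two_eq_one hp) hq]; exact one_ne_zero
  have hden (N : ℕ) : 1 - (-q) ^ p ^ N ≠ 0 := norm_ne_zero_iff.mp <| by
    rw [norm_one_sub_neg_pow_eq_one hp hq hp.pow]; exact one_ne_zero
  refine tendsto_of_binomial_recurrence (T := fun n N => qFermionicSum q (p ^ N) n) hq' hE ?_ ?_ n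
  · simp only [qFermionicSum_zero (hden _), hE0]
    exact tendsto_const_nhds
  · intro m hm
    exact tendsto_qFermionicSum_recurrence_defect hp hq (Nat.one_le_iff_ne_zero.mp hm)
end

section
/- (Witt's formula for q-Euler polynomials) Let p be an odd prime and q ∈ ℚ_p with |1 − q|_p < 1. For every n ≥ 0 and every x ∈ ℤ_p, the limit lim_{N→∞} (1/[p^N]_{−q})·Σ_{y=0}^{p^N−1} (x+y)^n (−q)^y exists in ℚ_p and equals the q-Euler polynomial E_{n,q}(x) = Σ_{k=0}^{n} C(n,k)·E_{k,q}·x^{n−k}. -/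
/-!
Put `G z = ∑ₖ C(n,k) Eₖ z^(n-k)` (`appellPoly E n z`). Expanding `G (z + 1)` in powers of `z`
(the Appell addition formula), the recurrence for the `Eₖ` becomes `q G (z + 1) + G z = (1 + q) zⁿ`,
so the weighted sum telescopes: `(1 + q) ∑_{y<M} (z + y)ⁿ (-q)^y = G z - (-q)^M G (z + M)`.
For `M = p^N` and odd `p`, `(-q)^M = -q^(p^N) → -1`, because `p ∣ q - 1` in `ℤ_p` forces
`p^(N+1) ∣ q^(p^N) - 1`; also `z + p^N → z`. Hence the normalised sums tend to `(G z + G z) / 2`.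
-/

open Filter Finset Topology

section

variable {R : Type*} [CommRing R]

def appellPoly (a : ℕ → R) (n : ℕ) (z : R) : R :=
  ∑ k ∈ range (n + 1), (n.choose k : R) * a k * z ^ (n - k)

theorem appellPoly_add (a : ℕ → R) (n : ℕ) (z w : R) :
    appellPoly a n (z + w) =
      ∑ j ∈ range (n + 1), (n.choose j : R) * appellPoly a j w * z ^ (n - j) := by
  simp only [appellPoly, mul_sum, sum_mul]
  rw [sum_comm' (t' := range (n + 1)) (s' := fun k => Ico k (n + 1))
    (fun j k => by simp only [mem_range, mem_Ico]; omega)]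
  refine sum_congr rfl fun k hk => ?_
  have hkn : k ≤ n := Nat.lt_succ_iff.mp (mem_range.mp hk)
  rw [sum_Ico_eq_sum_range, add_comm z, add_pow, mul_sum, show n + 1 - k = n - k + 1 by omega]
  refine sum_congr rfl fun l _ => ?_
  have hchoose : (n.choose (k + l) : R) * ((k + l).choose k) = n.choose k * (n - k).choose l := by
    rw [← Nat.cast_mul, ← Nat.cast_mul, Nat.choose_mul (Nat.le_add_right k l),
      Nat.add_sub_cancel_left]
  rw [Nat.add_sub_cancel_left, show n - (k + l) = n - k - l by omega]
  linear_combination (-a k * w ^ l * z ^ (n - k - l)) * hchoose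

theorem appellPoly_one (a : ℕ → R) (n : ℕ) :
    appellPoly a n 1 = ∑ k ∈ range (n + 1), (n.choose k : R) * a k := by
  simp [appellPoly]

theorem continuous_appellPoly [TopologicalSpace R] [IsTopologicalRing R] (a : ℕ → R) (n : ℕ) :
    Continuous (appellPoly a n) := by
  unfold appellPoly
  fun_prop

def IsQEulerNumbers (q : R) (E : ℕ → R) : Prop :=
  E 0 = 1 ∧ ∀ m : ℕ, 1 ≤ m → q * ∑ k ∈ range (m + 1), (m.choose k : R) * E k + E m = 0

namespace IsQEulerNumbers

variable {q : R} {E : ℕ → R}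

theorem mul_appellPoly_add_one_add (hE : IsQEulerNumbers q E) (n : ℕ) (z : R) :
    q * appellPoly E n (z + 1) + appellPoly E n z = (1 + q) * z ^ n := by
  rw [appellPoly_add, appellPoly, mul_sum, ← sum_add_distrib,
    sum_eq_single_of_mem 0 (mem_range.mpr n.succ_pos)]
  · simp [appellPoly, hE.1, add_mul, add_comm]
  · intro j _ hj
    have hrec := hE.2 j (Nat.one_le_iff_ne_zero.mpr hj)
    rw [← appellPoly_one] at hrec
    linear_combination ((n.choose j : R) * z ^ (n - j)) * hrec

theorem one_add_mul_sum_add_pow_mul_neg_pow (hE : IsQEulerNumbers q E) (n : ℕ) (z : R) (M : ℕ) :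
    (1 + q) * ∑ y ∈ range M, (z + y) ^ n * (-q) ^ y =
      appellPoly E n z - (-q) ^ M * appellPoly E n (z + M) := by
  have htel := sum_range_sub' (fun y => (-q) ^ y * appellPoly E n (z + y)) M
  simp only [pow_zero, one_mul, Nat.cast_zero, add_zero] at htel
  rw [← htel, mul_sum]
  refine sum_congr rfl fun y _ => ?_
  rw [Nat.cast_succ, ← add_assoc]
  linear_combination (-(-q) ^ y) * hE.mul_appellPoly_add_one_add n (z + y)

end IsQEulerNumbers

end

theorem Padic.tendsto_pow_prime_pow {p : ℕ} [Fact p.Prime] {q : ℚ_[p]} (hq : ‖q - 1‖ < 1) :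
    Tendsto (fun N => q ^ p ^ N) atTop (𝓝 1) := by
  have hq1 : ‖q‖ ≤ 1 := by
    simpa using (Padic.nonarchimedean (q - 1) 1).trans (max_le hq.le norm_one.le)
  obtain ⟨r, rfl⟩ : ∃ r : ℤ_[p], (r : ℚ_[p]) = q := ⟨⟨q, hq1⟩, rfl⟩
  rw [tendsto_iff_norm_sub_tendsto_zero]
  refine squeeze_zero (fun _ => norm_nonneg _) (fun N => ?_)
    ((tendsto_pow_atTop_nhds_zero_of_lt_one (norm_nonneg _) (Padic.norm_p_lt_one (p := p))).comp
      (tendsto_add_atTop_nat 1))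
  obtain ⟨c, hc⟩ := dvd_sub_pow_of_dvd_sub ((PadicInt.norm_lt_one_iff_dvd (r - 1)).mp hq) N
  have hcoe : (r : ℚ_[p]) ^ p ^ N - 1 = (p : ℚ_[p]) ^ (N + 1) * c := by
    rw [one_pow] at hc
    exact_mod_cast congrArg ((↑) : ℤ_[p] → ℚ_[p]) hc
  rw [hcoe, norm_mul, norm_pow]
  exact mul_le_of_le_one_right (by positivity) c.norm_le_one

/-- Witt's formula for the `q`-Euler polynomials: for an odd prime `p`, `q ∈ ℚ_p` with
`|1-q|_p < 1`, `q`-Euler numbers `E : ℕ → ℚ_p` (`E 0 = 1` and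
`q ∑_{k=0}^m C(m,k) E k + E m = 0` for `m ≥ 1`), every `n ≥ 0` and every `x ∈ ℤ_p`:
`lim_N (1/[p^N]₋q) ∑_{y=0}^{p^N-1} (x+y)^n (-q)^y = E_{n,q}(x) = ∑_{k=0}^n C(n,k) E k x^{n-k}`. -/
theorem witt_formula_q_euler_polynomials (p : ℕ) [Fact (Nat.Prime p)] (hp : Odd p)
    (q : ℚ_[p]) (hq : ‖1 - q‖ < 1)
    (E : ℕ → ℚ_[p]) (hE0 : E 0 = 1)
    (hE : ∀ m : ℕ, 1 ≤ m →
      q * ∑ k ∈ range (m + 1), (m.choose k : ℚ_[p]) * E k + E m = 0)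
    (n : ℕ) (x : ℤ_[p]) :
    Tendsto (fun N : ℕ =>
        ((1 + q) / (1 - (-q) ^ (p ^ N))) *
          ∑ y ∈ range (p ^ N), ((x + (y : ℤ_[p]) : ℤ_[p]) : ℚ_[p]) ^ n * (-q) ^ y)
      atTop
      (nhds (∑ k ∈ range (n + 1), (n.choose k : ℚ_[p]) * E k * ((x : ℚ_[p]) ^ (n - k)))) := by
  have hqE : IsQEulerNumbers q E := ⟨hE0, hE⟩
  have hsign : Tendsto (fun N => (-q) ^ p ^ N) atTop (𝓝 (-1)) := by
    simpa only [hp.pow.neg_pow] using (Padic.tendsto_pow_prime_pow (by rwa [norm_sub_rev])).neg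
  have hshift : Tendsto (fun N => appellPoly E n (x + (p ^ N : ℕ))) atTop
      (𝓝 (appellPoly E n x)) := by
    refine ((continuous_appellPoly E n).tendsto _).comp ?_
    simpa using tendsto_const_nhds.add
      (tendsto_pow_atTop_nhds_zero_of_norm_lt_one (Padic.norm_p_lt_one (p := p)))
  have hlim := ((tendsto_const_nhds (x := appellPoly E n (x : ℚ_[p]))).sub
    (hsign.mul hshift)).div (tendsto_const_nhds.sub hsign) (by norm_num : (1 : ℚ_[p]) - -1 ≠ 0)
  rw [show ∀ a : ℚ_[p], (a - -1 * a) / (1 - -1) = a by intro a; ring] at hlim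
  refine hlim.congr fun N => ?_
  simp only [Pi.div_apply, PadicInt.coe_add, PadicInt.coe_natCast]
  rw [div_mul_eq_mul_div, hqE.one_add_mul_sum_add_pow_mul_neg_pow]
end

section
/- Let q ∈ ℂ with |q| < 1, x ∈ ℂ, and n ≥ 0. The series Σ_{m=0}^{∞} (−1)^m q^m (m+x)^n converges absolutely and [2]_q·Σ_{m=0}^{∞} (−1)^m q^m (m+x)^n = E_{n,q}(x). (This is the identity ζ_{q,E}(−n, x) = E_{n,q}(x) for the q-Euler zeta function ζ_{q,E}(s,x) = [2]_q·Σ_{m=0}^{∞} (−1)^m q^m (m+x)^{−s}.) -/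
open Finset

lemma qe_expand (q : ℂ) (hq : ‖q‖ < 1) (N : ℕ) (y : ℂ) :
    ∑' m : ℕ, (-q) ^ m * ((m : ℂ) + y) ^ N
      = ∑ k ∈ range (N + 1),
          ((N.choose k : ℂ) * y ^ (N - k)) * ∑' m : ℕ, (m : ℂ) ^ k * (-q) ^ m := by
  have hr : ‖(-q : ℂ)‖ < 1 := by simpa using hq
  have hAsum : ∀ k : ℕ, Summable (fun m : ℕ => (m : ℂ) ^ k * (-q) ^ m) := fun k =>
    summable_pow_mul_geometric_of_norm_lt_one k hr
  have key : (fun m : ℕ => (-q) ^ m * ((m : ℂ) + y) ^ N)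
      = fun m : ℕ => ∑ k ∈ range (N + 1),
        ((N.choose k : ℂ) * y ^ (N - k)) * ((m : ℂ) ^ k * (-q) ^ m) := by
    funext m
    rw [add_pow, Finset.mul_sum]
    exact Finset.sum_congr rfl fun k _ => by ring
  rw [key, Summable.tsum_finsetSum (fun k _ => (hAsum k).mul_left _)]
  exact Finset.sum_congr rfl fun k _ => tsum_mul_left

lemma qe_summable_aux (q : ℂ) (hq : ‖q‖ < 1) (x : ℂ) (n : ℕ) :
    Summable (fun m : ℕ => (-1 : ℂ) ^ m * q ^ m * ((m : ℂ) + x) ^ n) := by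
  have hr : ‖(-q : ℂ)‖ < 1 := by simpa using hq
  have key : (fun m : ℕ => (-1 : ℂ) ^ m * q ^ m * ((m : ℂ) + x) ^ n)
      = fun m : ℕ => ∑ k ∈ range (n + 1),
        ((n.choose k : ℂ) * x ^ (n - k)) * ((m : ℂ) ^ k * (-q) ^ m) := by
    funext m
    rw [add_pow, Finset.mul_sum]
    refine Finset.sum_congr rfl fun k _ => ?_
    have h1 : (-1 : ℂ) ^ m * q ^ m = (-q) ^ m := by rw [neg_pow]; ring
    rw [← h1]; ring
  rw [key]
  exact summable_sum fun k _ =>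
    (summable_pow_mul_geometric_of_norm_lt_one k hr).mul_left _

/-- For `q ∈ ℂ` with `|q| < 1`, `x ∈ ℂ` and `n ≥ 0`, the series
`∑_{m≥0} (-1)^m q^m (m+x)^n` converges absolutely and
`[2]_q ∑_{m≥0} (-1)^m q^m (m+x)^n = E_{n,q}(x)`, i.e. `ζ_{q,E}(-n,x) = E_{n,q}(x)`. -/
theorem q_euler_zeta_at_neg_integers (q : ℂ) (hq : ‖q‖ < 1) (x : ℂ)
    (E : ℕ → ℂ) (hE0 : E 0 = 1)
    (hE : ∀ m : ℕ, 1 ≤ m →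
      q * ∑ k ∈ range (m + 1), (m.choose k : ℂ) * E k + E m = 0)
    (n : ℕ) :
    Summable (fun m : ℕ => ‖(-1 : ℂ) ^ m * q ^ m * ((m : ℂ) + x) ^ n‖) ∧
    (1 + q) * ∑' m : ℕ, (-1 : ℂ) ^ m * q ^ m * ((m : ℂ) + x) ^ n
      = ∑ k ∈ range (n + 1), (n.choose k : ℂ) * E k * x ^ (n - k) := by
  have hr : ‖(-q : ℂ)‖ < 1 := by simpa using hq
  have hq1 : (1 : ℂ) + q ≠ 0 := by
    intro h
    have : q = -1 := by linear_combination h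
    rw [this] at hq; norm_num at hq
  have hsgn : ∀ m : ℕ, (-1 : ℂ) ^ m * q ^ m = (-q) ^ m := by
    intro m; rw [neg_pow]; ring
  set A : ℕ → ℂ := fun k => ∑' m : ℕ, (m : ℂ) ^ k * (-q) ^ m with hA
  have hA' : ∀ k : ℕ, A k = ∑' m : ℕ, (m : ℂ) ^ k * (-q) ^ m := fun _ => rfl
  have hAsum : ∀ k : ℕ, Summable (fun m : ℕ => (m : ℂ) ^ k * (-q) ^ m) := fun k =>
    summable_pow_mul_geometric_of_norm_lt_one k hr
  -- recurrence for A
  have hArec : ∀ k : ℕ,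
      q * ∑ j ∈ range (k + 2), ((k + 1).choose j : ℂ) * A j + A (k + 1) = 0 := by
    intro k
    have hshift : A (k + 1)
        = ∑' m : ℕ, ((m : ℂ) + 1) ^ (k + 1) * (-q) ^ (m + 1) := by
      rw [hA', Summable.tsum_eq_zero_add (hAsum (k + 1))]
      simp [pow_succ]
    have hfac : (fun m : ℕ => ((m : ℂ) + 1) ^ (k + 1) * (-q) ^ (m + 1))
        = fun m : ℕ => (-q) * ((-q) ^ m * ((m : ℂ) + 1) ^ (k + 1)) := by
      funext m; rw [pow_succ]; ring
    rw [hfac, tsum_mul_left] at hshift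
    rw [qe_expand q hq (k + 1) 1] at hshift
    simp only [one_pow, mul_one] at hshift
    rw [hshift]
    simp only [← hA']
    ring
  -- main identity: (1+q) * A k = E k
  have main : ∀ k : ℕ, (1 + q) * A k = E k := by
    intro k
    induction k using Nat.strong_induction_on with
    | _ k ih =>
      match k with
      | 0 =>
        have hA0 : A 0 = (1 - (-q))⁻¹ := by
          rw [hA', show (fun m : ℕ => (m : ℂ) ^ 0 * (-q) ^ m) = fun m : ℕ => (-q) ^ m by
            funext m; rw [pow_zero, one_mul]]
          exact tsum_geometric_of_norm_lt_one hr
        rw [hA0, hE0, show (1 : ℂ) - (-q) = 1 + q by ring, mul_inv_cancel₀ hq1]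
      | (k + 1) =>
        have h1 := hArec k
        have h2 := hE (k + 1) (Nat.le_add_left 1 k)
        -- split the sums at j = k+1
        rw [Finset.sum_range_succ] at h1 h2
        simp only [Nat.choose_self, Nat.cast_one, one_mul] at h1 h2
        have hS : (1 + q) * ∑ j ∈ range (k + 1), ((k + 1).choose j : ℂ) * A j
            = ∑ j ∈ range (k + 1), ((k + 1).choose j : ℂ) * E j := by
          rw [Finset.mul_sum]
          refine Finset.sum_congr rfl fun j hj => ?_
          rw [← ih j (Finset.mem_range.mp hj)]; ring
        have key : (1 + q) * ((1 + q) * A (k + 1)) = (1 + q) * E (k + 1) := by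
          linear_combination (1 + q) * h1 - h2 - q * hS
        exact mul_left_cancel₀ hq1 key
  constructor
  · exact (summable_norm_iff.mpr (qe_summable_aux q hq x n))
  · have key : (fun m : ℕ => (-1 : ℂ) ^ m * q ^ m * ((m : ℂ) + x) ^ n)
        = fun m : ℕ => (-q) ^ m * ((m : ℂ) + x) ^ n := by
      funext m; rw [← hsgn m]
    rw [key, qe_expand q hq n x, Finset.mul_sum]
    refine Finset.sum_congr rfl fun k _ => ?_
    have := main k
    rw [hA'] at this
    linear_combination ((n.choose k : ℂ) * x ^ (n - k)) * this
end

section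
/- Let q ∈ ℂ with |q| < 1 and let n ≥ 1 be an integer. The series Σ_{m=1}^{∞} (−1)^m q^m m^n converges absolutely and [2]_q·Σ_{m=1}^{∞} (−1)^m q^m m^n = E_{n,q}. (This is the identity ζ_{q,E}(−n) = E_{n,q} for ζ_{q,E}(s) = [2]_q·Σ_{m=1}^{∞} (−1)^m q^m m^{−s}.) -/
open Finset

/-!
For `‖z‖ < 1` put `T_k(z) = ∑_{m ≥ 0} m^k z^m`. Splitting off the term `m = 0` and expanding
`(m + 1)^k` binomially gives `T_k(z) = [k = 0] + z ∑_j C(k, j) T_j(z)`. At `z = -q` this says that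
`k ↦ (1 + q) T_k(-q)` satisfies the q-Euler recurrence and takes the value `1` at `k = 0`. As
`1 + q ≠ 0`, the recurrence determines a sequence from its value at `0`, so
`E_{n,q} = (1 + q) T_n(-q)`, and for `n ≥ 1` the term `m = 0` of `T_n` vanishes.
-/

/-- With `0 ^ 0 = 1`, the term `m = 0` contributes `1` when `k = 0`. -/
noncomputable def geomPowSum {𝕜 : Type*} [RCLike 𝕜] (k : ℕ) (z : 𝕜) : 𝕜 :=
  ∑' m : ℕ, (m : 𝕜) ^ k * z ^ m

def IsQEulerRec {R : Type*} [CommRing R] (q : R) (E : ℕ → R) : Prop :=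
  ∀ m : ℕ, 1 ≤ m → q * ∑ k ∈ range (m + 1), (m.choose k : R) * E k + E m = 0

section GeomPowSum

variable {𝕜 : Type*} [RCLike 𝕜] {z : 𝕜}

theorem summable_norm_natCast_pow_mul_pow (hz : ‖z‖ < 1) (k : ℕ) :
    Summable fun m : ℕ => ‖(m : 𝕜) ^ k * z ^ m‖ := by
  simpa [norm_mul, norm_pow] using
    summable_pow_mul_geometric_of_norm_lt_one (R := ℝ) k (r := ‖z‖) (by simpa using hz)

theorem summable_natCast_pow_mul_pow (hz : ‖z‖ < 1) (k : ℕ) :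
    Summable fun m : ℕ => (m : 𝕜) ^ k * z ^ m :=
  (summable_norm_natCast_pow_mul_pow hz k).of_norm

theorem geomPowSum_eq (hz : ‖z‖ < 1) (k : ℕ) :
    geomPowSum k z =
      (if k = 0 then 1 else 0) +
        z * ∑ j ∈ range (k + 1), (k.choose j : 𝕜) * geomPowSum j z := by
  have hbinom : ∀ m : ℕ, ((m + 1 : ℕ) : 𝕜) ^ k * z ^ (m + 1) =
      z * ∑ j ∈ range (k + 1), (k.choose j : 𝕜) * ((m : 𝕜) ^ j * z ^ m) := by
    intro m
    rw [Nat.cast_succ, add_pow, mul_sum, sum_mul]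
    refine sum_congr rfl fun j _ => ?_
    ring
  rw [geomPowSum, (summable_natCast_pow_mul_pow hz k).tsum_eq_zero_add]
  simp_rw [hbinom, tsum_mul_left]
  rw [Summable.tsum_finsetSum fun j _ => (summable_natCast_pow_mul_pow hz j).mul_left _]
  simp_rw [tsum_mul_left, geomPowSum]
  simp [zero_pow_eq]

theorem one_sub_mul_geomPowSum_zero (hz : ‖z‖ < 1) : (1 - z) * geomPowSum 0 z = 1 := by
  have h := geomPowSum_eq hz 0
  simp only [if_pos, zero_add, range_one, sum_singleton, Nat.choose_self, Nat.cast_one,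
    one_mul] at h
  linear_combination h

theorem geomPowSum_eq_tsum_succ (hz : ‖z‖ < 1) {k : ℕ} (hk : k ≠ 0) :
    geomPowSum k z = ∑' m : ℕ, z ^ (m + 1) * ((m : 𝕜) + 1) ^ k := by
  rw [geomPowSum, (summable_natCast_pow_mul_pow hz k).tsum_eq_zero_add]
  simp [hk, mul_comm]

end GeomPowSum

section QEuler

variable {R : Type*} [CommRing R] {q : R} {E : ℕ → R}

theorem IsQEulerRec.one_add_mul_succ (hE : IsQEulerRec q E) (m : ℕ) :
    (1 + q) * E (m + 1) = -(q * ∑ k ∈ range (m + 1), ((m + 1).choose k : R) * E k) := by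
  have h := hE (m + 1) (Nat.le_add_left 1 m)
  rw [sum_range_succ, Nat.choose_self, Nat.cast_one, one_mul] at h
  linear_combination h

theorem IsQEulerRec.eq [IsDomain R] (hq : 1 + q ≠ 0) {F : ℕ → R} (hE : IsQEulerRec q E)
    (hF : IsQEulerRec q F) (h0 : E 0 = F 0) : E = F := by
  funext m
  induction m using Nat.strong_induction_on with
  | _ m ih =>
    cases m with
    | zero => exact h0
    | succ m =>
      refine mul_left_cancel₀ hq ?_
      rw [hE.one_add_mul_succ, hF.one_add_mul_succ]
      congr 2
      exact sum_congr rfl fun k hk => by rw [ih k (by simpa [Nat.lt_succ_iff] using hk)]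

end QEuler

theorem isQEulerRec_one_add_mul_geomPowSum {q : ℂ} (hq : ‖q‖ < 1) :
    IsQEulerRec q fun k => (1 + q) * geomPowSum k (-q) := by
  intro m hm
  have h := geomPowSum_eq (z := -q) (by simpa using hq) m
  rw [if_neg (by omega)] at h
  simp_rw [← mul_assoc, mul_comm _ (1 + q), mul_assoc, ← mul_sum]
  linear_combination (1 + q) * h

theorem one_add_mul_geomPowSum_zero {q : ℂ} (hq : ‖q‖ < 1) :
    (1 + q) * geomPowSum 0 (-q) = 1 := by
  simpa using one_sub_mul_geomPowSum_zero (z := -q) (by simpa using hq)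

/-- For `q ∈ ℂ` with `|q| < 1` and an integer `n ≥ 1`, the series
`∑_{m≥1} (-1)^m q^m m^n` converges absolutely and
`[2]_q ∑_{m≥1} (-1)^m q^m m^n = E_{n,q}`, i.e. `ζ_{q,E}(-n) = E_{n,q}`. -/
theorem q_euler_zeta_numbers_at_neg_integers (q : ℂ) (hq : ‖q‖ < 1)
    (E : ℕ → ℂ) (hE0 : E 0 = 1)
    (hE : ∀ m : ℕ, 1 ≤ m →
      q * ∑ k ∈ range (m + 1), (m.choose k : ℂ) * E k + E m = 0)
    (n : ℕ) (hn : 1 ≤ n) :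
    Summable (fun m : ℕ => ‖(-1 : ℂ) ^ (m + 1) * q ^ (m + 1) * ((m : ℂ) + 1) ^ n‖) ∧
    (1 + q) * ∑' m : ℕ, (-1 : ℂ) ^ (m + 1) * q ^ (m + 1) * ((m : ℂ) + 1) ^ n = E n := by
  have hz : ‖-q‖ < 1 := by rwa [norm_neg]
  have hgeom0 := one_add_mul_geomPowSum_zero hq
  have hE_eq : E = fun k => (1 + q) * geomPowSum k (-q) :=
    IsQEulerRec.eq (left_ne_zero_of_mul_eq_one hgeom0) hE (isQEulerRec_one_add_mul_geomPowSum hq)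
      (by rw [hE0, hgeom0])
  simp_rw [← neg_pow]
  constructor
  · refine ((summable_nat_add_iff 1).mpr (summable_norm_natCast_pow_mul_pow hz n)).congr
      fun m => ?_
    rw [Nat.cast_succ, mul_comm]
  · rw [← geomPowSum_eq_tsum_succ hz (by omega), hE_eq]
end

section
/- Let q ∈ ℂ with |q| < 1, let d be an odd positive integer, and let χ be a Dirichlet character modulo d with values in ℂ. For every n ≥ 0, the n-th derivative at t = 0 of the function F_{q,χ}(t) = [2]_q·(Σ_{a=1}^{d} (−1)^a q^a χ(a) e^{ta})/(q^d e^{td} + 1) (which is analytic on a neighborhood of 0 where q^d e^{td} + 1 ≠ 0) equals [2]_q·Σ_{m=1}^{∞} (−1)^m q^m χ(m) m^n, the latter series converging absolutely. (That is, l_q(−n, χ) = E_{n,χ,q}, where E_{n,χ,q} are the generalized q-Euler numbers attached to χ defined by F_{q,χ}(t) = Σ_n E_{n,χ,q} t^n/n!, and l_q(s,χ) = [2]_q·Σ_{m=1}^{∞} (−1)^m q^m χ(m) m^{−s}.) -/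
/-! On a half-plane `Re t < r` with `‖q‖ e^r < 1`, the series
`S(t) = ∑_{m ≥ 1} (-1)^m q^m χ(m) e^{tm}` converges uniformly, and since `d` is odd and `χ` is
`d`-periodic its terms pick up the factor `-q^d e^{td}` under `m ↦ m + d`. Hence
`S = ∑_{a=1}^d (-1)^a q^a χ(a) e^{ta} - q^d e^{td} S`, i.e. `F_{q,χ} = [2]_q S` there.
By Weierstrass' theorem the uniformly convergent series of holomorphic functions `S` may be
differentiated termwise, which gives the `n`-th derivative at `0`. -/

open Finset Filter Topology

section IteratedDeriv

variable {E ι : Type*} [NormedAddCommGroup E] [NormedSpace ℂ E] [CompleteSpace E] {U : Set ℂ}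

theorem TendstoLocallyUniformlyOn.iteratedDeriv {φ : Filter ι} {F : ι → ℂ → E}
    {f : ℂ → E} (hf : TendstoLocallyUniformlyOn F f φ U)
    (hF : ∀ᶠ i in φ, DifferentiableOn ℂ (F i) U) (hU : IsOpen U) (n : ℕ) :
    TendstoLocallyUniformlyOn (fun i => iteratedDeriv n (F i)) (iteratedDeriv n f) φ U := by
  induction n with
  | zero => simpa using hf
  | succ n ih =>
    simp only [iteratedDeriv_succ]
    refine ih.deriv ?_ hU
    filter_upwards [hF] with i hi
    simpa only [iteratedDeriv_eq_iterate] using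
      ((hi.analyticOnNhd hU).iterated_deriv n).differentiableOn

theorem hasSum_iteratedDeriv_of_summable_norm {F : ι → ℂ → E} {u : ι → ℝ} {z : ℂ}
    (hu : Summable u) (hF : ∀ i, DifferentiableOn ℂ (F i) U) (hU : IsOpen U)
    (hF_le : ∀ i, ∀ w ∈ U, ‖F i w‖ ≤ u i) (hz : z ∈ U) (n : ℕ) :
    HasSum (fun i => iteratedDeriv n (F i) z) (iteratedDeriv n (fun w => ∑' i, F i w) z) := by
  have hsum := (tendstoUniformlyOn_tsum hu hF_le).tendstoLocallyUniformlyOn.iteratedDeriv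
    (Eventually.of_forall fun s => DifferentiableOn.fun_sum fun i _ => hF i) hU n
  refine (hsum.tendsto_at hz).congr fun s => ?_
  exact iteratedDeriv_fun_sum fun i _ => ((hF i).contDiffOn hU).contDiffAt (hU.mem_nhds hz)

theorem iteratedDeriv_const_mul_cexp_mul (c k z : ℂ) (n : ℕ) :
    iteratedDeriv n (fun w => c * Complex.exp (w * k)) z = c * k ^ n * Complex.exp (z * k) := by
  simp only [iteratedDeriv_const_mul_field, mul_comm _ k, iteratedDeriv_cexp_const_mul, mul_assoc]

theorem hasSum_iteratedDeriv_tsum_mul_cexp {c k : ι → ℂ} {u : ι → ℝ} {z : ℂ}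
    (hu : Summable u) (hU : IsOpen U)
    (hle : ∀ i, ∀ w ∈ U, ‖c i * Complex.exp (w * k i)‖ ≤ u i) (hz : z ∈ U) (n : ℕ) :
    HasSum (fun i => c i * k i ^ n * Complex.exp (z * k i))
      (iteratedDeriv n (fun w => ∑' i, c i * Complex.exp (w * k i)) z) := by
  simpa only [iteratedDeriv_const_mul_cexp_mul] using
    hasSum_iteratedDeriv_of_summable_norm hu (fun i => by fun_prop) hU hle hz n

end IteratedDeriv

theorem tsum_mul_add_one_eq_sum_range {K : Type*} [Field K] [TopologicalSpace K]
    [IsTopologicalRing K] [T2Space K] {f : ℕ → K} {x : K} {d : ℕ} (hf : Summable f)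
    (hfd : ∀ m, f (m + d) = -(x * f m)) :
    (x + 1) * ∑' m, f m = ∑ m ∈ range d, f m := by
  have h := hf.sum_add_tsum_nat_add d
  simp only [hfd, tsum_neg, tsum_mul_left] at h
  linear_combination -h

theorem exists_pos_mul_exp_lt_one {a : ℝ} (ha : a < 1) : ∃ r > 0, a * Real.exp r < 1 := by
  have hcont : Tendsto (fun r => a * Real.exp r) (𝓝[>] 0) (𝓝 a) := by
    simpa using ((Real.continuous_exp.tendsto 0).const_mul a).mono_left nhdsWithin_le_nhds
  exact ((hcont.eventually_lt_const ha).and self_mem_nhdsWithin).exists.imp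
    fun r h => ⟨h.2, h.1⟩

section qEuler

variable (q : ℂ) {d : ℕ} (χ : DirichletCharacter ℂ d)

noncomputable def qEulerCoeff (a : ℕ) : ℂ := (-1) ^ a * q ^ a * χ a

theorem norm_qEulerCoeff_le (a : ℕ) : ‖qEulerCoeff q χ a‖ ≤ ‖q‖ ^ a := by
  simpa [qEulerCoeff] using mul_le_of_le_one_right (by positivity) (χ.norm_le_one a)

theorem norm_qEulerCoeff_mul_cexp_le (t : ℂ) (a : ℕ) :
    ‖qEulerCoeff q χ a * Complex.exp (t * a)‖ ≤ (‖q‖ * Real.exp t.re) ^ a := by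
  rw [norm_mul, mul_comm t, Complex.exp_nat_mul, norm_pow, Complex.norm_exp, mul_pow]
  gcongr
  exact norm_qEulerCoeff_le q χ a

theorem summable_norm_qEulerCoeff_mul_pow (hq : ‖q‖ < 1) (n : ℕ) :
    Summable fun m : ℕ => ‖qEulerCoeff q χ (m + 1) * ((m : ℂ) + 1) ^ n‖ := by
  have hgeo : Summable fun m : ℕ => ((m + 1 : ℕ) : ℝ) ^ n * ‖q‖ ^ (m + 1) :=
    (summable_nat_add_iff (f := fun m : ℕ => (m : ℝ) ^ n * ‖q‖ ^ m) 1).2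
      (summable_pow_mul_geometric_of_norm_lt_one n (by simpa using hq))
  refine hgeo.of_nonneg_of_le (fun m => norm_nonneg _) fun m => ?_
  rw [norm_mul, norm_pow, mul_comm]
  gcongr
  · exact_mod_cast (Complex.norm_natCast (m + 1)).le
  · exact norm_qEulerCoeff_le q χ (m + 1)

theorem qEulerCoeff_mul_cexp_add_of_odd (hd : Odd d) (t : ℂ) (a : ℕ) :
    qEulerCoeff q χ (a + d) * Complex.exp (t * (a + d : ℕ)) =
      -(q ^ d * Complex.exp (t * d) * (qEulerCoeff q χ a * Complex.exp (t * a))) := by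
  simp only [qEulerCoeff, pow_add, hd.neg_one_pow, Nat.cast_add, ZMod.natCast_self, add_zero,
    mul_add, Complex.exp_add]
  ring

theorem q_pow_mul_cexp_add_one_ne_zero {t : ℂ} (hd : d ≠ 0) (ht : ‖q‖ * Real.exp t.re < 1) :
    q ^ d * Complex.exp (t * d) + 1 ≠ 0 := by
  have hlt : ‖q ^ d * Complex.exp (t * d)‖ < 1 := by
    rw [norm_mul, norm_pow, mul_comm t, Complex.exp_nat_mul, norm_pow, Complex.norm_exp,
      ← mul_pow]
    exact pow_lt_one₀ (by positivity) ht hd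
  intro h
  simp [eq_neg_of_add_eq_zero_left h] at hlt

theorem mul_tsum_qEulerCoeff_mul_cexp (hd : Odd d) {t : ℂ} (ht : ‖q‖ * Real.exp t.re < 1) :
    (q ^ d * Complex.exp (t * d) + 1) *
        ∑' m : ℕ, qEulerCoeff q χ (m + 1) * Complex.exp (t * (m + 1 : ℕ)) =
      ∑ a ∈ Icc 1 d, qEulerCoeff q χ a * Complex.exp (t * a) := by
  have hsum : Summable fun m : ℕ => qEulerCoeff q χ (m + 1) * Complex.exp (t * (m + 1 : ℕ)) :=
    .of_norm_bounded ((summable_nat_add_iff 1).2 (summable_geometric_of_lt_one (by positivity) ht))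
      fun m => norm_qEulerCoeff_mul_cexp_le q χ t _
  rw [tsum_mul_add_one_eq_sum_range hsum fun m => by
      simpa only [add_right_comm] using qEulerCoeff_mul_cexp_add_of_odd q χ hd t (m + 1),
    Finset.range_eq_Ico,
    Finset.sum_Ico_add' (fun a => qEulerCoeff q χ a * Complex.exp (t * a)) 0 d 1]
  rfl

end qEuler

theorem generalized_q_euler_lq_at_neg_integers_general (q : ℂ) (hq : ‖q‖ < 1)
    (d : ℕ) (hd : Odd d)
    (χ : DirichletCharacter ℂ d) :
    ∃ U : Set ℂ, IsOpen U ∧ (0 : ℂ) ∈ U ∧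
      (∀ t ∈ U, q ^ d * Complex.exp (t * d) + 1 ≠ 0) ∧
      AnalyticOnNhd ℂ
        (fun t => (1 + q) *
          (∑ a ∈ Finset.Icc 1 d,
            (-1 : ℂ) ^ a * q ^ a * χ (a : ZMod d) * Complex.exp (t * a)) /
          (q ^ d * Complex.exp (t * d) + 1)) U ∧
      (∀ n : ℕ,
        Summable (fun m : ℕ =>
          ‖(-1 : ℂ) ^ (m + 1) * q ^ (m + 1) * χ ((m + 1 : ℕ) : ZMod d) * ((m : ℂ) + 1) ^ n‖)) ∧
      (∀ n : ℕ,
        iteratedDeriv n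
          (fun t => (1 + q) *
            (∑ a ∈ Finset.Icc 1 d,
              (-1 : ℂ) ^ a * q ^ a * χ (a : ZMod d) * Complex.exp (t * a)) /
            (q ^ d * Complex.exp (t * d) + 1)) 0
        = (1 + q) *
            ∑' m : ℕ,
              (-1 : ℂ) ^ (m + 1) * q ^ (m + 1) * χ ((m + 1 : ℕ) : ZMod d) * ((m : ℂ) + 1) ^ n) := by
  obtain ⟨r, hr0, hr⟩ := exists_pos_mul_exp_lt_one hq
  set U : Set ℂ := {t | t.re < r}
  have hU : IsOpen U := isOpen_lt Complex.continuous_re continuous_const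
  have h0U : (0 : ℂ) ∈ U := by simpa [U] using hr0
  have hqU : ∀ t ∈ U, ‖q‖ * Real.exp t.re < 1 := fun t ht =>
    lt_of_le_of_lt (by gcongr; exact ht.le) hr
  have hne : ∀ t ∈ U, q ^ d * Complex.exp (t * d) + 1 ≠ 0 := fun t ht =>
    q_pow_mul_cexp_add_one_ne_zero q hd.pos.ne' (hqU t ht)
  refine ⟨U, hU, h0U, hne, fun t ht => ?_,
    summable_norm_qEulerCoeff_mul_pow q χ hq, fun n => ?_⟩
  · fun_prop (disch := exact hne t ht)
  set G : ℂ → ℂ := fun t => ∑' m : ℕ, qEulerCoeff q χ (m + 1) * Complex.exp (t * (m + 1 : ℕ))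
  refine (Filter.EventuallyEq.iteratedDeriv_eq (g := fun t => (1 + q) * G t) n ?_).trans ?_
  · filter_upwards [hU.mem_nhds h0U] with t ht
    rw [div_eq_iff (hne t ht), mul_assoc, mul_comm (G t),
      mul_tsum_qEulerCoeff_mul_cexp q χ hd (hqU t ht)]
    rfl
  have hle : ∀ m, ∀ w ∈ U, ‖qEulerCoeff q χ (m + 1) * Complex.exp (w * (m + 1 : ℕ))‖ ≤
      (‖q‖ * Real.exp r) ^ (m + 1) := fun m w hw =>
    (norm_qEulerCoeff_mul_cexp_le q χ w (m + 1)).trans (by gcongr; exact hw.le)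
  have hgeo : Summable fun m : ℕ => (‖q‖ * Real.exp r) ^ (m + 1) :=
    (summable_nat_add_iff 1).2 (summable_geometric_of_lt_one (by positivity) hr)
  rw [iteratedDeriv_const_mul_field,
    ← (hasSum_iteratedDeriv_tsum_mul_cexp hgeo hU hle h0U n).tsum_eq]
  simp [qEulerCoeff]

/-- For `q ∈ ℂ` with `|q| < 1`, an odd positive integer `d`, and a Dirichlet character `χ`
mod `d` with values in `ℂ`: the function
`F_{q,χ}(t) = [2]_q (∑_{a=1}^d (-1)^a q^a χ(a) e^{ta})/(q^d e^{td} + 1)` is analytic on a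
neighborhood of `0` where `q^d e^{td} + 1 ≠ 0`, and for every `n ≥ 0` its `n`-th derivative at
`t = 0` equals `[2]_q ∑_{m≥1} (-1)^m q^m χ(m) m^n` (the series converging absolutely);
that is, `l_q(-n,χ) = E_{n,χ,q}`. -/
theorem generalized_q_euler_lq_at_neg_integers (q : ℂ) (hq : ‖q‖ < 1)
    (d : ℕ) (hd : Odd d) (hd0 : 0 < d)
    (χ : DirichletCharacter ℂ d) :
    ∃ U : Set ℂ, IsOpen U ∧ (0 : ℂ) ∈ U ∧
      (∀ t ∈ U, q ^ d * Complex.exp (t * d) + 1 ≠ 0) ∧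
      AnalyticOnNhd ℂ
        (fun t => (1 + q) *
          (∑ a ∈ Finset.Icc 1 d,
            (-1 : ℂ) ^ a * q ^ a * χ (a : ZMod d) * Complex.exp (t * a)) /
          (q ^ d * Complex.exp (t * d) + 1)) U ∧
      (∀ n : ℕ,
        Summable (fun m : ℕ =>
          ‖(-1 : ℂ) ^ (m + 1) * q ^ (m + 1) * χ ((m + 1 : ℕ) : ZMod d) * ((m : ℂ) + 1) ^ n‖)) ∧
      (∀ n : ℕ,
        iteratedDeriv n
          (fun t => (1 + q) *
            (∑ a ∈ Finset.Icc 1 d,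
              (-1 : ℂ) ^ a * q ^ a * χ (a : ZMod d) * Complex.exp (t * a)) /
            (q ^ d * Complex.exp (t * d) + 1)) 0
        = (1 + q) *
            ∑' m : ℕ,
              (-1 : ℂ) ^ (m + 1) * q ^ (m + 1) * χ ((m + 1 : ℕ) : ZMod d) * ((m : ℂ) + 1) ^ n) :=
  generalized_q_euler_lq_at_neg_integers_general q hq d hd χ
end

section
/- Let q ∈ ℂ with |q| < 1, let F be an odd positive integer, let a be an integer with 0 < a ≤ F, and let s ∈ ℂ. Then the partial q-zeta function satisfies H_q(s, a | F) = (−1)^a q^a F^{−s}·([2]_q/[2]_{q^F})·ζ_{q^F,E}(s, a/F), where H_q(s, a | F) = [2]_q·Σ_{n=0}^{∞} (−1)^{a+nF} q^{a+nF} (a+nF)^{−s} and ζ_{q^F,E}(s, x) = [2]_{q^F}·Σ_{n=0}^{∞} (−1)^n q^{Fn} (n+x)^{−s} for real x > 0; both series converge absolutely for every s ∈ ℂ. -/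
/-!
Writing `a + nF = F (n + a/F)` and using `(-1)^{nF} = (-1)^n` for odd `F`, the `n`-th term of the
series for `H_q(s, a | F)` is `(-1)^a q^a F^{-s}` times the `n`-th term of the series for
`ζ_{q^F,E}(s, a/F)`. Absolute convergence holds because `|(n + x)^{-s}| = (n + x)^{-Re s}` grows at
most polynomially, which the geometric factor `|q|^{Fn}` absorbs.
-/

open Asymptotics Filter

lemma rpow_add_le_mul_pow_ceil {x : ℝ} (hx : 0 ≤ x) (t : ℝ) {n : ℕ} (hn : 1 ≤ n) :
    ((n : ℝ) + x) ^ t ≤ (1 + x) ^ ⌈t⌉₊ * (n : ℝ) ^ ⌈t⌉₊ := by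
  have hn' : (1 : ℝ) ≤ n := by exact_mod_cast hn
  calc ((n : ℝ) + x) ^ t ≤ ((n : ℝ) + x) ^ (⌈t⌉₊ : ℝ) :=
        Real.rpow_le_rpow_of_exponent_le (by linarith) (Nat.le_ceil t)
    _ = ((n : ℝ) + x) ^ ⌈t⌉₊ := Real.rpow_natCast _ _
    _ ≤ ((1 + x) * n) ^ ⌈t⌉₊ := by gcongr; nlinarith
    _ = (1 + x) ^ ⌈t⌉₊ * (n : ℝ) ^ ⌈t⌉₊ := mul_pow _ _ _

lemma summable_rpow_mul_geometric {r : ℝ} (hr : ‖r‖ < 1) {x : ℝ} (hx : 0 ≤ x) (t : ℝ) :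
    Summable (fun n : ℕ => ((n : ℝ) + x) ^ t * r ^ n) := by
  refine summable_of_isBigO_nat (summable_pow_mul_geometric_of_norm_lt_one ⌈t⌉₊ hr) ?_
  refine IsBigO.of_bound ((1 + x) ^ ⌈t⌉₊) ?_
  filter_upwards [eventually_ge_atTop 1] with n hn
  simp only [norm_mul, norm_pow, Real.norm_natCast, ← mul_assoc]
  gcongr
  rw [Real.norm_of_nonneg (by positivity)]
  exact rpow_add_le_mul_pow_ceil hx t hn

lemma norm_exp_neg_mul_log (s : ℂ) {y : ℝ} (hy : 0 < y) :
    ‖Complex.exp (-s * Real.log y)‖ = y ^ (-s.re) := by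
  rw [Complex.norm_exp, Real.rpow_def_of_pos hy]
  congr 1
  simp [Complex.mul_re, mul_comm]

lemma summable_norm_pow_mul_exp_neg_mul_log {z : ℂ} (hz : ‖z‖ < 1) {x : ℝ} (hx : 0 < x)
    (s : ℂ) : Summable (fun n : ℕ => ‖z ^ n * Complex.exp (-s * Real.log (n + x))‖) := by
  refine (summable_rpow_mul_geometric (r := ‖z‖) (by simpa using hz) hx.le (-s.re)).congr
    fun n => ?_
  rw [norm_mul, norm_pow, norm_exp_neg_mul_log s (by positivity), mul_comm]

lemma Real.log_add_mul_eq_log_add_log {a F : ℝ} (ha : 0 < a) (hF : 0 < F) {n : ℝ}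
    (hn : 0 ≤ n) :
    Real.log (a + n * F) = Real.log F + Real.log (n + a / F) := by
  rw [← Real.log_mul hF.ne' (by positivity)]
  congr 1
  field_simp
  ring

lemma partial_zeta_term_eq_mul (q s : ℂ) {F : ℕ} (hF : Odd F) {a : ℕ} (ha : 0 < a) (n : ℕ) :
    (-1 : ℂ) ^ (a + n * F) * q ^ (a + n * F) *
        Complex.exp (-s * (Real.log ((a : ℝ) + n * F) : ℂ))
      = (-1 : ℂ) ^ a * q ^ a * Complex.exp (-s * (Real.log (F : ℝ) : ℂ)) *
        ((-1 : ℂ) ^ n * q ^ (F * n) *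
          Complex.exp (-s * (Real.log ((n : ℝ) + (a : ℝ) / (F : ℝ)) : ℂ))) := by
  have hlog := Real.log_add_mul_eq_log_add_log (a := a) (F := F) (by positivity)
    (by exact_mod_cast hF.pos) (Nat.cast_nonneg n)
  rw [hlog, Complex.ofReal_add, mul_add, Complex.exp_add, pow_add, pow_add, mul_comm n F, pow_mul,
    hF.neg_one_pow]
  ring

theorem partial_q_zeta_function_formula_general (q : ℂ) (hq : ‖q‖ < 1)
    (F : ℕ) (hF : Odd F)
    (a : ℕ) (ha : 0 < a) (s : ℂ) :
    Summable (fun n : ℕ =>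
      ‖(-1 : ℂ) ^ (a + n * F) * q ^ (a + n * F) *
        Complex.exp (-s * (Real.log ((a : ℝ) + n * F) : ℂ))‖) ∧
    Summable (fun n : ℕ =>
      ‖(-1 : ℂ) ^ n * q ^ (F * n) *
        Complex.exp (-s * (Real.log ((n : ℝ) + (a : ℝ) / (F : ℝ)) : ℂ))‖) ∧
    (1 + q) *
        ∑' n : ℕ, (-1 : ℂ) ^ (a + n * F) * q ^ (a + n * F) *
          Complex.exp (-s * (Real.log ((a : ℝ) + n * F) : ℂ))
      = (-1 : ℂ) ^ a * q ^ a * Complex.exp (-s * (Real.log (F : ℝ) : ℂ)) *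
          ((1 + q) / (1 + q ^ F)) *
          ((1 + q ^ F) *
            ∑' n : ℕ, (-1 : ℂ) ^ n * q ^ (F * n) *
              Complex.exp (-s * (Real.log ((n : ℝ) + (a : ℝ) / (F : ℝ)) : ℂ))) := by
  have hqF : ‖-q ^ F‖ < 1 := by
    rw [norm_neg, norm_pow]
    exact pow_lt_one₀ (norm_nonneg q) hq hF.pos.ne'
  have hζ : Summable (fun n : ℕ =>
      ‖(-1 : ℂ) ^ n * q ^ (F * n) *
        Complex.exp (-s * (Real.log ((n : ℝ) + (a : ℝ) / (F : ℝ)) : ℂ))‖) := by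
    refine (summable_norm_pow_mul_exp_neg_mul_log hqF (x := a / F)
      (div_pos (Nat.cast_pos.2 ha) (Nat.cast_pos.2 hF.pos)) s).congr fun n => ?_
    rw [neg_pow, pow_mul]
  have hden : 1 + q ^ F ≠ 0 := fun h => by
    rw [show -q ^ F = 1 by linear_combination -h, norm_one] at hqF
    exact lt_irrefl _ hqF
  simp only [partial_zeta_term_eq_mul q s hF ha, norm_mul _ (_ * _), tsum_mul_left]
  refine ⟨hζ.mul_left _, hζ, ?_⟩
  field_simp

/-- For `q ∈ ℂ` with `|q| < 1`, an odd positive integer `F`, an integer `a` with `0 < a ≤ F`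
and `s ∈ ℂ`, the partial `q`-zeta function
`H_q(s,a|F) = [2]_q ∑_{n≥0} (-1)^{a+nF} q^{a+nF} (a+nF)^{-s}` satisfies
`H_q(s,a|F) = (-1)^a q^a F^{-s} ([2]_q/[2]_{q^F}) ζ_{q^F,E}(s,a/F)`, where
`ζ_{q^F,E}(s,x) = [2]_{q^F} ∑_{n≥0} (-1)^n q^{Fn} (n+x)^{-s}`; both series converge
absolutely (`z^{-s} = exp(-s log z)` with the real logarithm). -/
theorem partial_q_zeta_function_formula (q : ℂ) (hq : ‖q‖ < 1)
    (F : ℕ) (hF : Odd F) (hF0 : 0 < F)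
    (a : ℕ) (ha : 0 < a) (haF : a ≤ F) (s : ℂ) :
    Summable (fun n : ℕ =>
      ‖(-1 : ℂ) ^ (a + n * F) * q ^ (a + n * F) *
        Complex.exp (-s * (Real.log ((a : ℝ) + n * F) : ℂ))‖) ∧
    Summable (fun n : ℕ =>
      ‖(-1 : ℂ) ^ n * q ^ (F * n) *
        Complex.exp (-s * (Real.log ((n : ℝ) + (a : ℝ) / (F : ℝ)) : ℂ))‖) ∧
    (1 + q) *
        ∑' n : ℕ, (-1 : ℂ) ^ (a + n * F) * q ^ (a + n * F) *
          Complex.exp (-s * (Real.log ((a : ℝ) + n * F) : ℂ))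
      = (-1 : ℂ) ^ a * q ^ a * Complex.exp (-s * (Real.log (F : ℝ) : ℂ)) *
          ((1 + q) / (1 + q ^ F)) *
          ((1 + q ^ F) *
            ∑' n : ℕ, (-1 : ℂ) ^ n * q ^ (F * n) *
              Complex.exp (-s * (Real.log ((n : ℝ) + (a : ℝ) / (F : ℝ)) : ℂ))) :=
  partial_q_zeta_function_formula_general q hq F hF a ha s
end

section
/- Let q ∈ ℂ with |q| < 1, let F be an odd positive integer, let a be an integer with 0 < a ≤ F, and let n ≥ 0. Then H_q(−n, a | F) = (−1)^a q^a F^n·([2]_q/[2]_{q^F})·Σ_{k=0}^{n} C(n,k)·(a/F)^{n−k}·E_{k,q^F}, where H_q(−n, a | F) = [2]_q·Σ_{m=0}^{∞} (−1)^{a+mF} q^{a+mF} (a+mF)^{n} (the series converging absolutely). -/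
open Finset

private lemma aux_summable (Q : ℂ) (hQ : ‖Q‖ < 1) (k : ℕ) :
    Summable (fun m : ℕ => (-1 : ℂ) ^ m * Q ^ m * (m : ℂ) ^ k) := by
  have hnQ : ‖-Q‖ < 1 := by rwa [norm_neg]
  refine (summable_pow_mul_geometric_of_norm_lt_one (R := ℂ) k hnQ).congr fun m => ?_
  rw [neg_pow]; ring

private lemma aux_rec (Q : ℂ) (hQ : ‖Q‖ < 1) (k : ℕ) :
    Q * ∑ j ∈ range (k + 1), (k.choose j : ℂ) *
        (∑' m : ℕ, (-1 : ℂ) ^ m * Q ^ m * (m : ℂ) ^ j)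
      + (∑' m : ℕ, (-1 : ℂ) ^ m * Q ^ m * (m : ℂ) ^ k)
      = if k = 0 then 1 else 0 := by
  have h1 : ∑ j ∈ range (k + 1), (k.choose j : ℂ) *
        (∑' m : ℕ, (-1 : ℂ) ^ m * Q ^ m * (m : ℂ) ^ j)
      = ∑' m : ℕ, (-1 : ℂ) ^ m * Q ^ m * ((m : ℂ) + 1) ^ k := by
    have e1 : ∀ j ∈ range (k + 1), (k.choose j : ℂ) *
        (∑' m : ℕ, (-1 : ℂ) ^ m * Q ^ m * (m : ℂ) ^ j)
        = ∑' m : ℕ, (k.choose j : ℂ) * ((-1 : ℂ) ^ m * Q ^ m * (m : ℂ) ^ j) :=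
      fun j _ => (tsum_mul_left).symm
    rw [Finset.sum_congr rfl e1,
      ← Summable.tsum_finsetSum (fun j _ => (aux_summable Q hQ j).mul_left _)]
    congr 1; funext m
    rw [add_pow, Finset.mul_sum]
    refine Finset.sum_congr rfl fun j _ => ?_
    ring
  have h2 : (∑' m : ℕ, (-1 : ℂ) ^ m * Q ^ m * (m : ℂ) ^ k)
      = (if k = 0 then 1 else 0)
        - Q * ∑' m : ℕ, (-1 : ℂ) ^ m * Q ^ m * ((m : ℂ) + 1) ^ k := by
    rw [Summable.tsum_eq_zero_add (aux_summable Q hQ k)]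
    have h0 : (-1 : ℂ) ^ (0:ℕ) * Q ^ (0:ℕ) * ((0:ℕ) : ℂ) ^ k
        = if k = 0 then 1 else 0 := by
      rcases Nat.eq_zero_or_pos k with hk | hk
      · simp [hk]
      · simp [Nat.pos_iff_ne_zero.mp hk, zero_pow (Nat.pos_iff_ne_zero.mp hk)]
    rw [h0]
    have h3 : ∑' m : ℕ, (-1 : ℂ) ^ (m + 1) * Q ^ (m + 1) * ((m + 1 : ℕ) : ℂ) ^ k
        = - (Q * ∑' m : ℕ, (-1 : ℂ) ^ m * Q ^ m * ((m : ℂ) + 1) ^ k) := by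
      rw [← tsum_mul_left, ← tsum_neg]
      congr 1; funext m
      push_cast
      ring
    rw [h3]; ring
  rw [h1, h2]; ring

private lemma aux_euler (Q : ℂ) (hQ : ‖Q‖ < 1) (E : ℕ → ℂ) (hE0 : E 0 = 1)
    (hE : ∀ m : ℕ, 1 ≤ m →
      Q * ∑ j ∈ range (m + 1), (m.choose j : ℂ) * E j + E m = 0) (k : ℕ) :
    E k = (1 + Q) * ∑' m : ℕ, (-1 : ℂ) ^ m * Q ^ m * (m : ℂ) ^ k := by
  have h1Q : (1 : ℂ) + Q ≠ 0 := by
    intro h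
    have : Q = -1 := by linear_combination h
    rw [this, norm_neg, norm_one] at hQ
    exact absurd hQ (lt_irrefl _)
  induction k using Nat.strong_induction_on with
  | _ k ih =>
    set T : ℕ → ℂ := fun j => ∑' m : ℕ, (-1 : ℂ) ^ m * Q ^ m * (m : ℂ) ^ j with hTdef
    rcases Nat.eq_zero_or_pos k with hk | hk
    · have h0 := aux_rec Q hQ 0
      rw [if_pos rfl] at h0
      rw [show range (0 + 1) = {0} from rfl, Finset.sum_singleton] at h0
      simp only [Nat.choose_self, Nat.cast_one, one_mul] at h0
      rw [hk, hE0]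
      linear_combination -h0
    · have hkne : k ≠ 0 := Nat.pos_iff_ne_zero.mp hk
      have h1 := hE k hk
      have h2 := aux_rec Q hQ k
      rw [if_neg hkne] at h2
      rw [Finset.sum_range_succ] at h1 h2
      simp only [Nat.choose_self, Nat.cast_one, one_mul] at h1 h2
      show E k = (1 + Q) * T k
      have hSE : ∑ j ∈ range k, (k.choose j : ℂ) * E j
          = (1 + Q) * ∑ j ∈ range k, (k.choose j : ℂ) * T j := by
        rw [Finset.mul_sum]
        refine Finset.sum_congr rfl fun j hj => ?_
        rw [ih j (Finset.mem_range.mp hj)]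
        ring
      have key : (1 + Q) * E k = (1 + Q) * ((1 + Q) * T k) := by
        linear_combination h1 - (1 + Q) * h2 - Q * hSE
      exact mul_left_cancel₀ h1Q key

/-- For `q ∈ ℂ` with `|q| < 1`, an odd positive integer `F`, an integer `a` with `0 < a ≤ F`,
and `n ≥ 0`: `H_q(-n,a|F) = (-1)^a q^a F^n ([2]_q/[2]_{q^F}) ∑_{k=0}^n C(n,k) (a/F)^{n-k} E_{k,q^F}`,
where `H_q(-n,a|F) = [2]_q ∑_{m≥0} (-1)^{a+mF} q^{a+mF} (a+mF)^n` (the series converging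
absolutely) and `E'` denotes the `q^F`-Euler numbers. -/
theorem partial_q_zeta_at_neg_integers (q : ℂ) (hq : ‖q‖ < 1)
    (F : ℕ) (hF : Odd F) (hF0 : 0 < F)
    (a : ℕ) (ha : 0 < a) (haF : a ≤ F)
    (E' : ℕ → ℂ) (hE'0 : E' 0 = 1)
    (hE' : ∀ m : ℕ, 1 ≤ m →
      q ^ F * ∑ j ∈ range (m + 1), (m.choose j : ℂ) * E' j + E' m = 0)
    (n : ℕ) :
    Summable (fun m : ℕ =>
      ‖(-1 : ℂ) ^ (a + m * F) * q ^ (a + m * F) * ((a : ℂ) + m * F) ^ n‖) ∧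
    (1 + q) *
        ∑' m : ℕ, (-1 : ℂ) ^ (a + m * F) * q ^ (a + m * F) * ((a : ℂ) + m * F) ^ n
      = (-1 : ℂ) ^ a * q ^ a * (F : ℂ) ^ n * ((1 + q) / (1 + q ^ F)) *
          ∑ k ∈ range (n + 1),
            (n.choose k : ℂ) * ((a : ℂ) / (F : ℂ)) ^ (n - k) * E' k := by
  have hQ : ‖q ^ F‖ < 1 := by
    rw [norm_pow]
    calc ‖q‖ ^ F ≤ ‖q‖ ^ 1 := pow_le_pow_of_le_one (norm_nonneg q) hq.le hF0
    _ = ‖q‖ := pow_one _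
    _ < 1 := hq
  have h1Q : (1 : ℂ) + q ^ F ≠ 0 := by
    intro h
    have : q ^ F = -1 := by linear_combination h
    rw [this, norm_neg, norm_one] at hQ
    exact absurd hQ (lt_irrefl _)
  have hsum := aux_summable (q ^ F) hQ
  have hfeq : ∀ m : ℕ, (-1 : ℂ) ^ (a + m * F) * q ^ (a + m * F) * ((a : ℂ) + m * F) ^ n
      = (-1 : ℂ) ^ a * q ^ a *
          ∑ k ∈ range (n + 1), (n.choose k : ℂ) * (a : ℂ) ^ (n - k) * (F : ℂ) ^ k *
            ((-1 : ℂ) ^ m * (q ^ F) ^ m * (m : ℂ) ^ k) := by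
    intro m
    have hneg : (-1 : ℂ) ^ (a + m * F) = (-1 : ℂ) ^ a * (-1 : ℂ) ^ m := by
      rw [pow_add, mul_comm m F, pow_mul, hF.neg_one_pow]
    have hqp : q ^ (a + m * F) = q ^ a * (q ^ F) ^ m := by
      rw [pow_add, mul_comm m F, pow_mul]
    have hbin : ((a : ℂ) + m * F) ^ n
        = ∑ k ∈ range (n + 1), ((m : ℂ) * F) ^ k * (a : ℂ) ^ (n - k) * (n.choose k : ℂ) := by
      rw [add_comm, add_pow]
    rw [hneg, hqp, hbin]
    simp only [Finset.mul_sum]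
    refine Finset.sum_congr rfl fun k _ => ?_
    rw [mul_pow]
    ring
  have hsummand : ∀ k ∈ range (n + 1),
      Summable (fun m : ℕ => (n.choose k : ℂ) * (a : ℂ) ^ (n - k) * (F : ℂ) ^ k *
        ((-1 : ℂ) ^ m * (q ^ F) ^ m * (m : ℂ) ^ k)) := fun k _ => (hsum k).mul_left _
  have hfsum : Summable (fun m : ℕ =>
      (-1 : ℂ) ^ (a + m * F) * q ^ (a + m * F) * ((a : ℂ) + m * F) ^ n) := by
    refine Summable.congr ?_ fun m => (hfeq m).symm
    exact (summable_sum (fun k hk => hsummand k hk)).mul_left _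
  refine ⟨summable_norm_iff.mpr hfsum, ?_⟩
  have htsum : ∑' m : ℕ, (-1 : ℂ) ^ (a + m * F) * q ^ (a + m * F) * ((a : ℂ) + m * F) ^ n
      = (-1 : ℂ) ^ a * q ^ a *
          ∑ k ∈ range (n + 1), (n.choose k : ℂ) * (a : ℂ) ^ (n - k) * (F : ℂ) ^ k *
            (∑' m : ℕ, (-1 : ℂ) ^ m * (q ^ F) ^ m * (m : ℂ) ^ k) := by
    rw [tsum_congr hfeq, tsum_mul_left, Summable.tsum_finsetSum hsummand]
    congr 1
    refine Finset.sum_congr rfl fun k _ => ?_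
    rw [tsum_mul_left]
  rw [htsum]
  have hFne : (F : ℂ) ≠ 0 := Nat.cast_ne_zero.mpr hF0.ne'
  simp only [Finset.mul_sum]
  refine Finset.sum_congr rfl fun k hk => ?_
  rw [aux_euler (q ^ F) hQ E' hE'0 hE' k]
  have hkn : k ≤ n := Nat.lt_succ_iff.mp (Finset.mem_range.mp hk)
  have hFpow : (F : ℂ) ^ n = (F : ℂ) ^ (n - k) * (F : ℂ) ^ k := by
    rw [← pow_add, Nat.sub_add_cancel hkn]
  rw [div_pow]
  field_simp
  rw [hFpow]
  ring
end

section
/- Let q ∈ ℂ with |q| < 1, let F be an odd positive integer, and let χ be a Dirichlet character modulo F with values in ℂ. Then l_q(0, χ) = ([2]_q/[2]_{q^F})·Σ_{a=1}^{F} (−1)^a q^a χ(a), where l_q(0, χ) = [2]_q·Σ_{m=1}^{∞} (−1)^m q^m χ(m) (the series converging absolutely). -/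
/-!
The summand `(-q) ^ m χ(m)` is quasi-periodic: shifting `m` by the odd period `F` of `χ`
multiplies it by `-q ^ F`. Cutting the series into blocks of length `F` therefore turns it into
a geometric series with ratio `-q ^ F` times the first block.
-/

open Finset

section QuasiPeriodic

variable {𝕜 : Type*} [NormedField 𝕜] {f : ℕ → 𝕜} {N : ℕ} {r : 𝕜}

theorem apply_mul_add_of_forall_add_eq_mul (h : ∀ n, f (n + N) = r * f n) (k i : ℕ) :
    f (k * N + i) = r ^ k * f i := by
  induction k with
  | zero => simp
  | succ k ih => rw [add_mul, one_mul, add_right_comm, h, ih, pow_succ', mul_assoc]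

theorem summable_norm_of_forall_add_eq_mul (hN : 0 < N) (hr : ‖r‖ < 1)
    (h : ∀ n, f (n + N) = r * f n) : Summable fun n => ‖f n‖ := by
  have : NeZero N := ⟨hN.ne'⟩
  rw [← (Nat.divModEquiv N).symm.summable_iff]
  refine (summable_prod_of_nonneg fun _ => norm_nonneg _).mpr
    ⟨fun _ => (hasSum_fintype _).summable, ?_⟩
  simp only [Nat.divModEquiv_symm_apply, apply_mul_add_of_forall_add_eq_mul h,
    norm_mul, norm_pow, tsum_fintype, ← mul_sum]
  exact (summable_geometric_of_lt_one (norm_nonneg r) hr).mul_right _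

variable [CompleteSpace 𝕜]

theorem tsum_eq_of_forall_add_eq_mul (hN : 0 < N) (hr : ‖r‖ < 1)
    (h : ∀ n, f (n + N) = r * f n) : ∑' n, f n = (1 - r)⁻¹ * ∑ i ∈ range N, f i := by
  have : NeZero N := ⟨hN.ne'⟩
  have hsum : Summable fun p => f ((Nat.divModEquiv N).symm p) :=
    (Nat.divModEquiv N).symm.summable_iff.mpr (summable_norm_of_forall_add_eq_mul hN hr h).of_norm
  rw [← (Nat.divModEquiv N).symm.tsum_eq, hsum.tsum_prod' fun _ => (hasSum_fintype _).summable]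
  simp only [Nat.divModEquiv_symm_apply, apply_mul_add_of_forall_add_eq_mul h,
    tsum_fintype, ← mul_sum, tsum_mul_right, tsum_geometric_of_norm_lt_one hr,
    Fin.sum_univ_eq_sum_range f]

end QuasiPeriodic

theorem lq_at_zero_general (q : ℂ) (hq : ‖q‖ < 1)
    (F : ℕ) (hF : Odd F)
    (χ : DirichletCharacter ℂ F) :
    Summable (fun m : ℕ =>
      ‖(-1 : ℂ) ^ (m + 1) * q ^ (m + 1) * χ ((m + 1 : ℕ) : ZMod F)‖) ∧
    (1 + q) * ∑' m : ℕ, (-1 : ℂ) ^ (m + 1) * q ^ (m + 1) * χ ((m + 1 : ℕ) : ZMod F)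
      = ((1 + q) / (1 + q ^ F)) *
          ∑ a ∈ Finset.Icc 1 F, (-1 : ℂ) ^ a * q ^ a * χ (a : ZMod F) := by
  set g : ℕ → ℂ := fun m => (-1 : ℂ) ^ (m + 1) * q ^ (m + 1) * χ ((m + 1 : ℕ) : ZMod F)
  have hr : ‖-q ^ F‖ < 1 := by
    rw [norm_neg, norm_pow]
    exact pow_lt_one₀ (norm_nonneg q) hq hF.pos.ne'
  have hg : ∀ n, g (n + F) = -q ^ F * g n := by
    intro n
    have hχ : χ ((n + 1 + F : ℕ) : ZMod F) = χ ((n + 1 : ℕ) : ZMod F) := by simp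
    simp only [g]
    rw [add_right_comm n F 1, hχ, pow_add, pow_add, hF.neg_one_pow]
    ring
  have hsum : ∑ i ∈ range F, g i = ∑ a ∈ Icc 1 F, (-1 : ℂ) ^ a * q ^ a * χ (a : ZMod F) := by
    rw [range_eq_Ico, sum_Ico_add' (fun a : ℕ => (-1 : ℂ) ^ a * q ^ a * χ (a : ZMod F)), zero_add,
      Ico_add_one_right_eq_Icc]
  refine ⟨summable_norm_of_forall_add_eq_mul hF.pos hr hg, ?_⟩
  rw [tsum_eq_of_forall_add_eq_mul hF.pos hr hg, hsum, sub_neg_eq_add, div_eq_mul_inv, mul_assoc]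

/-- For `q ∈ ℂ` with `|q| < 1`, an odd positive integer `F`, and a Dirichlet character `χ`
mod `F` with values in `ℂ`:
`l_q(0,χ) = [2]_q ∑_{m≥1} (-1)^m q^m χ(m)` (absolutely convergent) equals
`([2]_q/[2]_{q^F}) ∑_{a=1}^F (-1)^a q^a χ(a)`. -/
theorem lq_at_zero (q : ℂ) (hq : ‖q‖ < 1)
    (F : ℕ) (hF : Odd F) (hF0 : 0 < F)
    (χ : DirichletCharacter ℂ F) :
    Summable (fun m : ℕ =>
      ‖(-1 : ℂ) ^ (m + 1) * q ^ (m + 1) * χ ((m + 1 : ℕ) : ZMod F)‖) ∧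
    (1 + q) * ∑' m : ℕ, (-1 : ℂ) ^ (m + 1) * q ^ (m + 1) * χ ((m + 1 : ℕ) : ZMod F)
      = ((1 + q) / (1 + q ^ F)) *
          ∑ a ∈ Finset.Icc 1 F, (-1 : ℂ) ^ a * q ^ a * χ (a : ZMod F) :=
  lq_at_zero_general q hq F hF χ
end

section
/- Let p be an odd prime and q ∈ ℚ_p with |1 − q|_p < 1. For every continuous function f : ℤ_p → ℚ_p such that I_{−q^p}(y ↦ f(p·y)) exists, the limit lim_{N→∞} (1/[p^N]_{−q})·Σ_{y=0}^{p^{N−1}−1} f(p·y)(−q)^{p y} exists and equals ([2]_q/[2]_{q^p})·I_{−q^p}(y ↦ f(p·y)). (This expresses the measure transformation dμ_{−q}(p x) = ([2]_q/[2]_{q^p})·dμ_{−q^p}(x) on the subset pℤ_p.) -/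
open Filter Finset

/-! Since `p` is odd, `(-q)^(p y) = (-q^p)^y` and `[p^N]_{-q} = [p^(N-1)]_{-q^p} [2]_{q^p}/[2]_q`,
so the `N`-th sum for `-q` over `p ℤ_p` is `[2]_q/[2]_{q^p}` times the `(N-1)`-st Riemann sum of
`I_{-q^p}`; the factor is well defined because `|1 - q^p|_p < 1` forces `q^p ≠ -1` when `p ≠ 2`. -/

lemma IsUltrametricDist.norm_one_sub_pow_lt_one {R : Type*} [SeminormedRing R]
    [IsUltrametricDist R] {x : R} (hx : ‖1 - x‖ < 1) (n : ℕ) : ‖1 - x ^ n‖ < 1 := by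
  induction n with
  | zero => simp
  | succ n ih =>
    have hprod : ‖(1 - x) * (1 - x ^ n)‖ < 1 :=
      (norm_mul_le _ _).trans_lt (mul_lt_one_of_nonneg_of_lt_one_left (norm_nonneg _) hx ih.le)
    have hsplit : 1 - x ^ (n + 1) = (1 - x) + (1 - x ^ n) + -((1 - x) * (1 - x ^ n)) := by
      rw [pow_succ']; noncomm_ring
    rw [hsplit]
    refine (norm_add_le_max _ _).trans_lt (max_lt ((norm_add_le_max _ _).trans_lt ?_) ?_)
    · exact max_lt hx ih
    · rwa [norm_neg]

lemma Padic.one_add_ne_zero_of_norm_one_sub_lt_one {p : ℕ} [Fact p.Prime] (hp : p ≠ 2)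
    {x : ℚ_[p]} (hx : ‖1 - x‖ < 1) : 1 + x ≠ 0 := by
  intro hx0
  rw [show (1 : ℚ_[p]) - x = (2 : ℕ) by rw [eq_neg_of_add_eq_zero_right hx0]; norm_num,
    Padic.norm_natCast_lt_one_iff] at hx
  exact hp ((Nat.prime_dvd_prime_iff_eq Fact.out Nat.prime_two).mp hx)

lemma Odd.div_mul_sum_neg_pow_mul_eq {K : Type*} [Field K] {n : ℕ} (hn : Odd n) {q : K}
    (hq : 1 + q ^ n ≠ 0) (M : ℕ) (g : ℕ → K) :
    (1 + q) / (1 - (-q) ^ (n ^ (M + 1))) * ∑ y ∈ range (n ^ M), g y * (-q) ^ (n * y) =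
      (1 + q) / (1 + q ^ n) *
        ((1 + q ^ n) / (1 - (-q ^ n) ^ (n ^ M)) * ∑ y ∈ range (n ^ M), g y * (-q ^ n) ^ y) := by
  simp only [pow_succ', pow_mul, hn.neg_pow, ← mul_assoc, div_mul_div_cancel₀ hq]

theorem measure_transformation_on_pZp_general (p : ℕ) [Fact (Nat.Prime p)] (hp : Odd p)
    (q : ℚ_[p]) (hq : ‖1 - q‖ < 1)
    (f : ℤ_[p] → ℚ_[p])
    (J : ℚ_[p])
    (hJ : Tendsto (fun N : ℕ =>
        ((1 + q ^ p) / (1 - (-q ^ p) ^ (p ^ N))) *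
          ∑ y ∈ range (p ^ N), f ((p : ℤ_[p]) * (y : ℤ_[p])) * (-q ^ p) ^ y)
      atTop (nhds J)) :
    Tendsto (fun N : ℕ =>
        ((1 + q) / (1 - (-q) ^ (p ^ N))) *
          ∑ y ∈ range (p ^ (N - 1)), f ((p : ℤ_[p]) * (y : ℤ_[p])) * (-q) ^ (p * y))
      atTop (nhds (((1 + q) / (1 + q ^ p)) * J)) := by
  have hqp : 1 + q ^ p ≠ 0 :=
    Padic.one_add_ne_zero_of_norm_one_sub_lt_one (hp.ne_two_of_dvd_nat dvd_rfl)
      (IsUltrametricDist.norm_one_sub_pow_lt_one hq p)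
  rw [← tendsto_add_atTop_iff_nat 1]
  simpa only [Nat.add_sub_cancel, hp.div_mul_sum_neg_pow_mul_eq hqp] using hJ.const_mul _

/-- Measure transformation `dμ₋q(px) = ([2]_q/[2]_{q^p}) dμ₋{q^p}(x)` on `pℤ_p`: for an odd
prime `p`, `q ∈ ℚ_p` with `|1-q|_p < 1`, and a continuous `f : ℤ_p → ℚ_p` such that the
fermionic `p`-adic `q^p`-integral `I₋{q^p}(y ↦ f(py)) = J` exists, the limit
`lim_N (1/[p^N]₋q) ∑_{y=0}^{p^{N-1}-1} f(py) (-q)^{py}` exists and equals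
`([2]_q/[2]_{q^p}) J`. -/
theorem measure_transformation_on_pZp (p : ℕ) [Fact (Nat.Prime p)] (hp : Odd p)
    (q : ℚ_[p]) (hq : ‖1 - q‖ < 1)
    (f : ℤ_[p] → ℚ_[p]) (hf : Continuous f)
    (J : ℚ_[p])
    (hJ : Tendsto (fun N : ℕ =>
        ((1 + q ^ p) / (1 - (-q ^ p) ^ (p ^ N))) *
          ∑ y ∈ range (p ^ N), f ((p : ℤ_[p]) * (y : ℤ_[p])) * (-q ^ p) ^ y)
      atTop (nhds J)) :
    Tendsto (fun N : ℕ =>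
        ((1 + q) / (1 - (-q) ^ (p ^ N))) *
          ∑ y ∈ range (p ^ (N - 1)), f ((p : ℤ_[p]) * (y : ℤ_[p])) * (-q) ^ (p * y))
      atTop (nhds (((1 + q) / (1 + q ^ p)) * J)) :=
  measure_transformation_on_pZp_general p hp q hq f J hJ
end

section
/- Let p be an odd prime, q ∈ ℚ_p with |1 − q|_p < 1, d an odd positive integer, and χ a Dirichlet character modulo d with values in ℚ_p. For every n ≥ 0, the limit lim_{N→∞} (1/[d p^N]_{−q})·Σ_{y=0}^{d p^{N−1}−1} χ(p y)·(p y)^n·(−q)^{p y} exists and equals χ(p)·p^n·([2]_q/[2]_{q^p})·E_{n,χ,q^p}, where E_{n,χ,q^p} := lim_{N→∞} (1/[d p^N]_{−q^p})·Σ_{x=0}^{d p^N−1} χ(x)·x^n·(−q^p)^x. (This is the formula ∫_{pX} χ(x) x^n dμ_{−q}(x) = χ(p) p^n ([2]_q/[2]_{q^p}) E_{n,χ,q^p}.) -/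
open Filter Finset

variable {p : ℕ} [Fact (Nat.Prime p)]

private lemma pnorm_sum_le {ι : Type*} (s : Finset ι) (f : ι → ℚ_[p]) {C : ℝ}
    (hC : 0 ≤ C) (h : ∀ i ∈ s, ‖f i‖ ≤ C) : ‖∑ i ∈ s, f i‖ ≤ C := by
  induction s using Finset.cons_induction with
  | empty => simpa using hC
  | cons a s ha ih =>
    rw [Finset.sum_cons]
    refine le_trans (Padic.nonarchimedean _ _) (max_le (h a (by simp)) ?_)
    exact ih fun i hi => h i (by simp [hi])

private lemma pnorm_pow_sub_one_le {u : ℚ_[p]} (hu : ‖u‖ ≤ 1) (m : ℕ) :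
    ‖u ^ m - 1‖ ≤ ‖u - 1‖ := by
  induction m with
  | zero => simp
  | succ m ih =>
    have : u ^ (m + 1) - 1 = u * (u ^ m - 1) + (u - 1) := by ring
    rw [this]
    refine le_trans (Padic.nonarchimedean _ _) (max_le ?_ le_rfl)
    calc ‖u * (u ^ m - 1)‖ = ‖u‖ * ‖u ^ m - 1‖ := norm_mul _ _
    _ ≤ 1 * ‖u - 1‖ := mul_le_mul hu ih (norm_nonneg _) zero_le_one
    _ = ‖u - 1‖ := one_mul _

private lemma pnorm_le_one_of_sub_one {u : ℚ_[p]} (hu : ‖u - 1‖ ≤ 1) : ‖u‖ ≤ 1 := by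
  have h : u = (u - 1) + 1 := by ring
  rw [h]
  exact le_trans (Padic.nonarchimedean _ _) (by simp [hu])

private lemma pnorm_pow_p_sub_one {u : ℚ_[p]} (hu : ‖u - 1‖ < 1) :
    ‖u ^ p - 1‖ ≤ ‖u - 1‖ * max (p : ℝ)⁻¹ ‖u - 1‖ := by
  have hu1 : ‖u‖ ≤ 1 := pnorm_le_one_of_sub_one hu.le
  have hgeom : u ^ p - 1 = (∑ i ∈ range p, u ^ i) * (u - 1) := (geom_sum_mul u p).symm
  have hsum : ‖∑ i ∈ range p, u ^ i‖ ≤ max (p : ℝ)⁻¹ ‖u - 1‖ := by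
    have hdecomp : (∑ i ∈ range p, u ^ i) = (∑ i ∈ range p, (u ^ i - 1)) + (p : ℚ_[p]) := by
      rw [Finset.sum_sub_distrib]; simp
    rw [hdecomp]
    refine le_trans (Padic.nonarchimedean _ _) (max_le ?_ ?_)
    · exact le_trans (pnorm_sum_le _ _ (norm_nonneg _) fun i _ => pnorm_pow_sub_one_le hu1 i)
        (le_max_right _ _)
    · rw [Padic.norm_p]; exact le_max_left _ _
  rw [hgeom, norm_mul, mul_comm]
  exact mul_le_mul_of_nonneg_left hsum (norm_nonneg _)

private lemma sum_range_mul_eq {M : Type*} [AddCommMonoid M] (f : ℕ → M) (a b : ℕ) :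
    ∑ x ∈ range (a * b), f x = ∑ j ∈ range a, ∑ y ∈ range b, f (j * b + y) := by
  induction a with
  | zero => simp
  | succ a ih =>
    rw [add_mul, one_mul, Finset.sum_range_add, ih, Finset.sum_range_succ]

/-- For an odd prime `p`, `q ∈ ℚ_p` with `|1-q|_p < 1`, an odd positive integer `d` and a
Dirichlet character `χ` mod `d` with values in `ℚ_p`: for every `n ≥ 0`,
`∫_{pX} χ(x) x^n dμ₋q(x) = lim_N (1/[d p^N]₋q) ∑_{y=0}^{d p^{N-1}-1} χ(py) (py)^n (-q)^{py}`
exists and equals `χ(p) p^n ([2]_q/[2]_{q^p}) E_{n,χ,q^p}`, where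
`E_{n,χ,q^p} = lim_N (1/[d p^N]₋{q^p}) ∑_{x=0}^{d p^N-1} χ(x) x^n (-q^p)^x`. -/
theorem integral_over_pX (p : ℕ) [Fact (Nat.Prime p)] (hp : Odd p)
    (q : ℚ_[p]) (hq : ‖1 - q‖ < 1)
    (d : ℕ) (hd : Odd d) (hd0 : 0 < d)
    (χ : DirichletCharacter ℚ_[p] d) (n : ℕ) :
    ∃ E : ℚ_[p],
      Tendsto (fun N : ℕ =>
          ((1 + q ^ p) / (1 - (-q ^ p) ^ (d * p ^ N))) *
            ∑ x ∈ range (d * p ^ N), χ (x : ZMod d) * (x : ℚ_[p]) ^ n * (-q ^ p) ^ x)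
        atTop (nhds E) ∧
      Tendsto (fun N : ℕ =>
          ((1 + q) / (1 - (-q) ^ (d * p ^ N))) *
            ∑ y ∈ range (d * p ^ (N - 1)),
              χ ((p * y : ℕ) : ZMod d) * ((p * y : ℕ) : ℚ_[p]) ^ n * (-q) ^ (p * y))
        atTop
        (nhds (χ ((p : ℕ) : ZMod d) * (p : ℚ_[p]) ^ n * ((1 + q) / (1 + q ^ p)) * E)) := by
  haveI : NeZero d := ⟨hd0.ne'⟩
  have hprime : Nat.Prime p := Fact.out
  have hp1 : 1 < p := hprime.one_lt
  -- basic norm facts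
  have hqsub : ‖q - 1‖ = ‖1 - q‖ := by rw [← norm_neg]; congr 1; ring
  have hq1 : ‖q‖ ≤ 1 := pnorm_le_one_of_sub_one (by rw [hqsub]; exact hq.le)
  have hqm : ∀ m : ℕ, ‖q ^ m - 1‖ ≤ ‖1 - q‖ := fun m => by
    rw [← hqsub]; exact pnorm_pow_sub_one_le hq1 m
  have hr1 : ‖q ^ p‖ ≤ 1 := by rw [norm_pow]; exact pow_le_one₀ (norm_nonneg _) hq1
  have hrq : ‖q ^ p - 1‖ ≤ ‖1 - q‖ := hqm p
  have hnat : ∀ m : ℕ, ‖(m : ℚ_[p])‖ ≤ 1 := fun m => by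
    have := Padic.norm_int_le_one (p := p) (m : ℤ)
    simpa using this
  -- the contraction ratio
  set ρ : ℝ := max (p : ℝ)⁻¹ ‖1 - q‖ with hρ_def
  have hρ0 : 0 ≤ ρ := le_trans (by positivity) (le_max_left _ _)
  have hρ1 : ρ < 1 := max_lt (inv_lt_one_of_one_lt₀ (by exact_mod_cast hp1)) hq
  have hpρ : (p : ℝ)⁻¹ ≤ ρ := le_max_left _ _
  have hqρ : ‖1 - q‖ ≤ ρ := le_max_right _ _
  -- key geometric decay
  have hkey : ∀ N : ℕ, ‖(q ^ p) ^ (d * p ^ N) - 1‖ ≤ ‖1 - q‖ * ρ ^ N := by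
    intro N
    induction N with
    | zero =>
      simpa using (pnorm_pow_sub_one_le hr1 d).trans hrq
    | succ N ih =>
      have hre : (q ^ p) ^ (d * p ^ (N + 1)) = ((q ^ p) ^ (d * p ^ N)) ^ p := by
        rw [← pow_mul]; ring_nf
      set u : ℚ_[p] := (q ^ p) ^ (d * p ^ N) with hu_def
      have hub : ‖u - 1‖ ≤ ‖1 - q‖ := ih.trans (by
        calc ‖1 - q‖ * ρ ^ N ≤ ‖1 - q‖ * 1 :=
          mul_le_mul_of_nonneg_left (pow_le_one₀ hρ0 hρ1.le) (norm_nonneg _)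
        _ = ‖1 - q‖ := mul_one _)
      have hu1 : ‖u - 1‖ < 1 := lt_of_le_of_lt hub hq
      rw [hre]
      calc ‖u ^ p - 1‖ ≤ ‖u - 1‖ * max (p : ℝ)⁻¹ ‖u - 1‖ := pnorm_pow_p_sub_one hu1
      _ ≤ (‖1 - q‖ * ρ ^ N) * ρ := by
          refine mul_le_mul ih (max_le hpρ (hub.trans hqρ)) ?_ (by positivity)
          exact le_max_of_le_left (by positivity)
      _ = ‖1 - q‖ * ρ ^ (N + 1) := by ring
  -- uniform bound on character values
  set C : ℝ := ((Finset.univ.sup fun a : ZMod d => ‖χ a‖₊ : NNReal) : ℝ) with hC_def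
  have hCb : ∀ a : ZMod d, ‖χ a‖ ≤ C := fun a => by
    rw [hC_def]
    exact_mod_cast Finset.le_sup (f := fun a : ZMod d => ‖χ a‖₊) (Finset.mem_univ a)
  have hC0 : 0 ≤ C := le_trans (norm_nonneg _) (hCb 1)
  -- the partial sums
  set S : ℕ → ℚ_[p] := fun N =>
    ∑ x ∈ range (d * p ^ N), χ (x : ZMod d) * (x : ℚ_[p]) ^ n * (-q ^ p) ^ x with hS_def
  -- Cauchy estimate
  have hcau : ∀ N : ℕ, ‖S (N + 1) - S N‖ ≤ C * ρ ^ N := by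
    intro N
    have hModd : Odd (d * p ^ N) := hd.mul hp.pow
    have hMcast : ((d * p ^ N : ℕ) : ZMod d) = 0 := by push_cast; simp
    have hMnorm : ‖((d * p ^ N : ℕ) : ℚ_[p])‖ ≤ (p : ℝ)⁻¹ ^ N := by
      push_cast
      rw [norm_mul, norm_pow, Padic.norm_p]
      exact mul_le_of_le_one_left (by positivity) (hnat d)
    have hrM : ‖(q ^ p) ^ (d * p ^ N) - 1‖ ≤ ρ ^ N :=
      (hkey N).trans (mul_le_of_le_one_left (by positivity) hq.le)
    have hrM1 : ‖(q ^ p) ^ (d * p ^ N)‖ ≤ 1 :=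
      pnorm_le_one_of_sub_one (hrM.trans (pow_le_one₀ hρ0 hρ1.le))
    have hsplit : S (N + 1) = ∑ j ∈ range p, ∑ y ∈ range (d * p ^ N),
        χ ((j * (d * p ^ N) + y : ℕ) : ZMod d) *
          ((j * (d * p ^ N) + y : ℕ) : ℚ_[p]) ^ n * (-q ^ p) ^ (j * (d * p ^ N) + y) := by
      simp only [hS_def]
      have he : d * p ^ (N + 1) = p * (d * p ^ N) := by ring
      rw [he]
      exact sum_range_mul_eq _ p (d * p ^ N)
    have hone : (∑ j ∈ range p, ((-1 : ℚ_[p])) ^ j) = 1 := by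
      rw [neg_one_geom_sum, if_neg (by simpa using hp)]
    have hSN : (∑ j ∈ range p, ∑ y ∈ range (d * p ^ N),
        (-1 : ℚ_[p]) ^ j * (χ (y : ZMod d) * (y : ℚ_[p]) ^ n * (-q ^ p) ^ y)) = S N := by
      simp only [hS_def, ← Finset.mul_sum]
      rw [← Finset.sum_mul, hone, one_mul]
    rw [hsplit, ← hSN, ← Finset.sum_sub_distrib]
    refine pnorm_sum_le _ _ (by positivity) fun j hj => ?_
    rw [← Finset.sum_sub_distrib]
    refine pnorm_sum_le _ _ (by positivity) fun y hy => ?_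
    have hχeq : χ (((j * (d * p ^ N) + y : ℕ)) : ZMod d) = χ ((y : ℕ) : ZMod d) := by
      congr 1
      push_cast
      push_cast at hMcast
      rw [show ((j : ZMod d) * ((d : ZMod d) * (p : ZMod d) ^ N) + (y : ZMod d))
          = (j : ZMod d) * ((d : ZMod d) * (p : ZMod d) ^ N) + (y : ZMod d) from rfl]
      rw [hMcast]
      ring
    have hQM : (-q ^ p) ^ (j * (d * p ^ N) + y) =
        (-1 : ℚ_[p]) ^ j * ((q ^ p) ^ (d * p ^ N)) ^ j * (-q ^ p) ^ y := by
      rw [pow_add]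
      congr 1
      rw [mul_comm j (d * p ^ N), pow_mul, Odd.neg_pow hModd, neg_pow]
    set I : ℚ_[p] := (((j * (d * p ^ N) + y : ℕ) : ℚ_[p]) ^ n - ((y : ℕ) : ℚ_[p]) ^ n) *
        ((q ^ p) ^ (d * p ^ N)) ^ j +
        ((y : ℕ) : ℚ_[p]) ^ n * (((q ^ p) ^ (d * p ^ N)) ^ j - 1) with hI_def
    have hkey2 : χ ((y : ℕ) : ZMod d) * ((j * (d * p ^ N) + y : ℕ) : ℚ_[p]) ^ n *
        ((-1 : ℚ_[p]) ^ j * ((q ^ p) ^ (d * p ^ N)) ^ j * (-q ^ p) ^ y) -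
        (-1 : ℚ_[p]) ^ j * (χ ((y : ℕ) : ZMod d) * ((y : ℕ) : ℚ_[p]) ^ n * (-q ^ p) ^ y)
        = χ ((y : ℕ) : ZMod d) * (-q ^ p) ^ y * ((-1 : ℚ_[p]) ^ j * I) := by
      rw [hI_def]; ring
    rw [hχeq, hQM, hkey2]
    have hIbound : ‖I‖ ≤ ρ ^ N := by
      rw [hI_def]
      refine le_trans (Padic.nonarchimedean _ _) (max_le ?_ ?_)
      · rw [norm_mul]
        have hpowd : ‖((j * (d * p ^ N) + y : ℕ) : ℚ_[p]) ^ n - ((y : ℕ) : ℚ_[p]) ^ n‖ ≤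
            (p : ℝ)⁻¹ ^ N := by
          obtain ⟨w, hw⟩ : ((d * p ^ N : ℕ) : ℤ) ∣
              ((j * (d * p ^ N) + y : ℕ) : ℤ) ^ n - ((y : ℕ) : ℤ) ^ n :=
            dvd_trans ⟨(j : ℤ), by push_cast; ring⟩ (sub_dvd_pow_sub_pow _ _ n)
          have hcast : ((j * (d * p ^ N) + y : ℕ) : ℚ_[p]) ^ n - ((y : ℕ) : ℚ_[p]) ^ n =
              ((d * p ^ N : ℕ) : ℚ_[p]) * ((w : ℤ) : ℚ_[p]) := by
            have h6 := congrArg (fun z : ℤ => (z : ℚ_[p])) hw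
            push_cast at h6 ⊢
            exact h6
          rw [hcast, norm_mul]
          calc ‖((d * p ^ N : ℕ) : ℚ_[p])‖ * ‖((w : ℤ) : ℚ_[p])‖
              ≤ ‖((d * p ^ N : ℕ) : ℚ_[p])‖ * 1 :=
            mul_le_mul_of_nonneg_left (Padic.norm_int_le_one w) (norm_nonneg _)
          _ ≤ (p : ℝ)⁻¹ ^ N := by rw [mul_one]; exact hMnorm
        calc ‖((j * (d * p ^ N) + y : ℕ) : ℚ_[p]) ^ n - ((y : ℕ) : ℚ_[p]) ^ n‖ *
              ‖((q ^ p) ^ (d * p ^ N)) ^ j‖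
            ≤ (p : ℝ)⁻¹ ^ N * 1 := by
              refine mul_le_mul hpowd ?_ (norm_nonneg _) (by positivity)
              rw [norm_pow]
              exact pow_le_one₀ (norm_nonneg _) hrM1
        _ = ((p : ℝ)⁻¹) ^ N := mul_one _
        _ ≤ ρ ^ N := pow_le_pow_left₀ (by positivity) hpρ N
      · rw [norm_mul]
        calc ‖((y : ℕ) : ℚ_[p]) ^ n‖ * ‖((q ^ p) ^ (d * p ^ N)) ^ j - 1‖
            ≤ 1 * ρ ^ N := by
              refine mul_le_mul ?_ ((pnorm_pow_sub_one_le hrM1 j).trans hrM)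
                (norm_nonneg _) zero_le_one
              rw [norm_pow]
              exact pow_le_one₀ (norm_nonneg _) (hnat y)
        _ = ρ ^ N := one_mul _
    have hfin : ‖χ ((y : ℕ) : ZMod d) * (-q ^ p) ^ y * ((-1 : ℚ_[p]) ^ j * I)‖
        = ‖χ ((y : ℕ) : ZMod d)‖ * ‖(-q ^ p) ^ y‖ * ‖I‖ := by
      rw [norm_mul, norm_mul ((-1 : ℚ_[p]) ^ j) I, norm_mul]
      have h13 : ‖(-1 : ℚ_[p]) ^ j‖ = 1 := by rw [norm_pow, norm_neg, norm_one, one_pow]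
      rw [h13, one_mul]
    rw [hfin]
    have hQyb : ‖(-q ^ p) ^ y‖ ≤ 1 := by
      rw [norm_pow, norm_neg]
      exact pow_le_one₀ (norm_nonneg _) hr1
    have h14 : ‖χ ((y : ℕ) : ZMod d)‖ * ‖(-q ^ p) ^ y‖ ≤ C :=
      le_trans (mul_le_mul (hCb _) hQyb (norm_nonneg _) hC0) (mul_one C).le
    exact mul_le_mul h14 hIbound (norm_nonneg _) hC0
  -- convergence of S
  have hCauchy : CauchySeq S := by
    refine cauchySeq_of_le_geometric ρ C hρ1 fun N => ?_
    rw [dist_eq_norm, norm_sub_rev]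
    exact hcau N
  obtain ⟨L, hL⟩ := cauchySeq_tendsto_of_complete hCauchy
  -- denominator limit
  have hrpow : Tendsto (fun N : ℕ => (q ^ p) ^ (d * p ^ N)) atTop (nhds 1) := by
    rw [tendsto_iff_norm_sub_tendsto_zero]
    refine squeeze_zero (fun N => norm_nonneg _) (fun N => hkey N) ?_
    simpa using (tendsto_pow_atTop_nhds_zero_of_lt_one hρ0 hρ1).const_mul ‖1 - q‖
  have hdeneq : ∀ N : ℕ, 1 - (-q ^ p) ^ (d * p ^ N) = 1 + (q ^ p) ^ (d * p ^ N) := by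
    intro N
    rw [Odd.neg_pow (hd.mul hp.pow)]
    ring
  have hden : Tendsto (fun N : ℕ => 1 - (-q ^ p) ^ (d * p ^ N)) atTop (nhds 2) := by
    simp only [hdeneq]
    have h7 := (tendsto_const_nhds (x := (1 : ℚ_[p])) (f := atTop (α := ℕ))).add hrpow
    norm_num at h7
    exact h7
  have hc : Tendsto (fun N : ℕ => (1 + q ^ p) / (1 - (-q ^ p) ^ (d * p ^ N))) atTop
      (nhds ((1 + q ^ p) / 2)) := tendsto_const_nhds.div hden two_ne_zero
  -- nonvanishing facts
  have h2norm : ‖(2 : ℚ_[p])‖ = 1 := by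
    refine le_antisymm (by simpa using Padic.norm_int_le_one (p := p) 2) ?_
    by_contra hlt
    push_neg at hlt
    have h8 : ‖((2 : ℤ) : ℚ_[p])‖ < 1 := by push_cast; exact hlt
    rw [Padic.norm_intCast_lt_one_iff] at h8
    have h9 : p ∣ 2 := by exact_mod_cast h8
    have := (Nat.prime_dvd_prime_iff_eq hprime Nat.prime_two).mp h9
    subst this
    exact (by norm_num : ¬ Odd 2) hp
  have hunit : ∀ u : ℚ_[p], ‖u - 1‖ < 1 → ‖1 + u‖ = 1 := by
    intro u hu
    have h10 : (1 : ℚ_[p]) + u = 2 + (u - 1) := by ring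
    rw [h10, Padic.add_eq_max_of_ne (by rw [h2norm]; exact (ne_of_gt hu)), h2norm]
    exact max_eq_left hu.le
  have hner : (1 : ℚ_[p]) + q ^ p ≠ 0 := by
    intro h
    have h11 := hunit (q ^ p) (lt_of_le_of_lt hrq hq)
    rw [h, norm_zero] at h11
    norm_num at h11
  have hXne : ∀ K : ℕ, (1 : ℚ_[p]) - (-q ^ p) ^ (d * p ^ K) ≠ 0 := by
    intro K h
    rw [hdeneq K] at h
    have h12 : ‖(1 : ℚ_[p]) + (q ^ p) ^ (d * p ^ K)‖ = 1 := by
      refine hunit _ (lt_of_le_of_lt ?_ hq)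
      rw [← pow_mul]
      exact hqm _
    rw [h, norm_zero] at h12
    norm_num at h12
  refine ⟨(1 + q ^ p) / 2 * L, hc.mul hL, ?_⟩
  -- recast the second sequence
  have hsum2 : ∀ K : ℕ, (∑ y ∈ range (d * p ^ K),
      χ ((p * y : ℕ) : ZMod d) * ((p * y : ℕ) : ℚ_[p]) ^ n * (-q) ^ (p * y))
      = χ ((p : ℕ) : ZMod d) * ((p : ℕ) : ℚ_[p]) ^ n * S K := by
    intro K
    simp only [hS_def]
    rw [Finset.mul_sum]
    refine Finset.sum_congr rfl fun y _ => ?_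
    have h1 : ((p * y : ℕ) : ZMod d) = ((p : ℕ) : ZMod d) * ((y : ℕ) : ZMod d) := by push_cast; ring
    have h2 : ((p * y : ℕ) : ℚ_[p]) = ((p : ℕ) : ℚ_[p]) * ((y : ℕ) : ℚ_[p]) := by push_cast; ring
    have h3 : (-q) ^ (p * y) = (-q ^ p) ^ y := by
      rw [pow_mul, Odd.neg_pow hp]
    rw [h1, map_mul, h2, h3, mul_pow]
    ring
  have hdeq : ∀ K : ℕ, (1 : ℚ_[p]) - (-q) ^ (d * p ^ (K + 1)) = 1 - (-q ^ p) ^ (d * p ^ K) := by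
    intro K
    rw [Odd.neg_pow (hd.mul hp.pow), Odd.neg_pow (hd.mul hp.pow), ← pow_mul]
    have he : p * (d * p ^ K) = d * p ^ (K + 1) := by ring
    rw [he]
  have h1tend : Tendsto (fun N : ℕ => χ ((p : ℕ) : ZMod d) * ((p : ℕ) : ℚ_[p]) ^ n *
      ((1 + q) / (1 + q ^ p)) *
      ((1 + q ^ p) / (1 - (-q ^ p) ^ (d * p ^ (N - 1))) * S (N - 1))) atTop
      (nhds (χ ((p : ℕ) : ZMod d) * ((p : ℕ) : ℚ_[p]) ^ n * ((1 + q) / (1 + q ^ p)) *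
        ((1 + q ^ p) / 2 * L))) :=
    ((hc.mul hL).comp (tendsto_sub_atTop_nat 1)).const_mul _
  refine Tendsto.congr' ?_ h1tend
  filter_upwards [eventually_ge_atTop 1] with N hN
  obtain ⟨K, rfl⟩ : ∃ K, N = K + 1 := ⟨N - 1, by omega⟩
  simp only [Nat.add_sub_cancel]
  rw [hsum2 K, hdeq K]
  rw [show χ ((p : ℕ) : ZMod d) * ((p : ℕ) : ℚ_[p]) ^ n * ((1 + q) / (1 + q ^ p)) *
      ((1 + q ^ p) / (1 - (-q ^ p) ^ (d * p ^ K)) * S K)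
      = ((1 + q) / (1 + q ^ p) * ((1 + q ^ p) / (1 - (-q ^ p) ^ (d * p ^ K)))) *
        (χ ((p : ℕ) : ZMod d) * ((p : ℕ) : ℚ_[p]) ^ n * S K) from by ring,
    div_mul_div_comm, mul_comm (1 + q) (1 + q ^ p), mul_div_mul_left _ _ hner]
end
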